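/- arXiv:2310.08269 — 9 statements merged into one kernel-verified Lean document; each statement's English description precedes it below -/
import Mathlib

section
/- Let p be a prime, let F be a finite group whose order is coprime to p, let H = ⊕_{n∈ℕ} ℤ/pℤ be the direct sum of countably many copies of the cyclic group of order p, and let G = H × F. Then every group topology τ on G is a product topology: there exist a group topology τ_H on H and a group topology τ_F on F such that τ coincides with the product topology of (H, τ_H) and (F, τ_F). -/
/-!
The exponents of `H` (a divisor of `p`) and of `F` (a divisor of `|F|`) are coprime, so by the
Chinese remainder theorem the projection `(h, f) ↦ (h, 1)` is a power map `g ↦ g ^ e`, and hence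
continuous for every group topology on `H × F`. Once this projection is continuous, so is
`g ↦ (g.1, 1)⁻¹ * g = (1, g.2)`, and the topology is the product of the topologies it induces
on the two factors.
-/

open Topology

def GroupTopology.comap {A B : Type*} [Group A] [Group B] (f : A →* B) (τ : GroupTopology B) :
    GroupTopology A :=
  letI := τ.toTopologicalSpace
  haveI := τ.toIsTopologicalGroup
  { toTopologicalSpace := .induced f τ.toTopologicalSpace
    toIsTopologicalGroup := topologicalGroup_induced f }

theorem GroupTopology.toTopologicalSpace_comap {A B : Type*} [Group A] [Group B] (f : A →* B)
    (τ : GroupTopology B) : (τ.comap f).toTopologicalSpace = τ.toTopologicalSpace.induced f :=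
  rfl

theorem AddMonoid.exponent_dvd_of_module_zmod (n : ℕ) (M : Type*) [AddCommMonoid M]
    [Module (ZMod n) M] : AddMonoid.exponent M ∣ n :=
  AddMonoid.exponent_dvd_of_forall_nsmul_eq_zero fun x => by
    rw [← Nat.cast_smul_eq_nsmul (ZMod n), ZMod.natCast_self, zero_smul]

theorem Prod.exists_forall_pow_eq_fst_one {A B : Type*} [Monoid A] [Monoid B]
    (h : (Monoid.exponent A).Coprime (Monoid.exponent B)) :
    ∃ e : ℕ, ∀ g : A × B, g ^ e = (g.1, 1) := by
  obtain ⟨e, he₁, he₀⟩ := Nat.chineseRemainder h 1 0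
  refine ⟨e, fun g => Prod.ext ?_ ?_⟩
  · simpa using pow_eq_pow_of_modEq he₁ (Monoid.pow_exponent_eq_one g.1)
  · simpa using pow_eq_pow_of_modEq he₀ (Monoid.pow_exponent_eq_one g.2)

theorem IsTopologicalGroup.eq_prod_induced_of_continuous {A B : Type*} [Group A] [Group B]
    [t : TopologicalSpace (A × B)] [IsTopologicalGroup (A × B)]
    (h : Continuous fun g : A × B => (g.1, (1 : B))) :
    t = @instTopologicalSpaceProd A B (t.induced (MonoidHom.inl A B))
      (t.induced (MonoidHom.inr A B)) := by
  have h' : Continuous fun g : A × B => ((1 : A), g.2) := by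
    convert h.inv.mul continuous_id using 1
    ext g <;> simp
  let tA : TopologicalSpace A := t.induced (MonoidHom.inl A B)
  let tB : TopologicalSpace B := t.induced (MonoidHom.inr A B)
  apply le_antisymm
  · exact continuous_id_iff_le.mp <|
      (continuous_induced_rng.2 h).prodMk (continuous_induced_rng.2 h')
  -- Two topologies live on `A × B` here, so the instances are passed by hand.
  · have hinl : Continuous[instTopologicalSpaceProd, t] fun g : A × B => MonoidHom.inl A B g.1 :=
      @Continuous.comp _ _ _ instTopologicalSpaceProd tA t _ _ continuous_induced_dom
        (@continuous_fst A B tA tB)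
    have hinr : Continuous[instTopologicalSpaceProd, t] fun g : A × B => MonoidHom.inr A B g.2 :=
      @Continuous.comp _ _ _ instTopologicalSpaceProd tB t _ _ continuous_induced_dom
        (@continuous_snd A B tA tB)
    have hdecomp := @Continuous.mul _ t _ _ _ instTopologicalSpaceProd _ _ hinl hinr
    refine continuous_id_iff_le.mp ?_
    convert hdecomp using 1
    ext g <;> simp

theorem groupTopology_on_product_is_product_general (p : ℕ)
    (F : Type) [Group F] (hcop : Nat.Coprime (Nat.card F) p)
    (τ : GroupTopology (Multiplicative (DirectSum ℕ fun _ : ℕ => ZMod p) × F)) :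
    ∃ (τH : GroupTopology (Multiplicative (DirectSum ℕ fun _ : ℕ => ZMod p)))
      (τF : GroupTopology F),
      τ.toTopologicalSpace =
        @instTopologicalSpaceProd _ _ τH.toTopologicalSpace τF.toTopologicalSpace := by
  let := τ.toTopologicalSpace
  have := τ.toIsTopologicalGroup
  have hH : Monoid.exponent (Multiplicative (DirectSum ℕ fun _ : ℕ => ZMod p)) ∣ p :=
    AddMonoid.exponent_dvd_of_module_zmod p (DirectSum ℕ fun _ : ℕ => ZMod p)
  have hexp := (hcop.symm.coprime_dvd_left hH).coprime_dvd_right Group.exponent_dvd_nat_card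
  obtain ⟨e, he⟩ := Prod.exists_forall_pow_eq_fst_one hexp
  refine ⟨τ.comap (MonoidHom.inl _ _), τ.comap (MonoidHom.inr _ _), ?_⟩
  rw [GroupTopology.toTopologicalSpace_comap, GroupTopology.toTopologicalSpace_comap]
  exact IsTopologicalGroup.eq_prod_induced_of_continuous ((continuous_pow e).congr he)

/-- Let `p` be a prime, `F` a finite group of order coprime to `p`,
`H = ⊕_{n ∈ ℕ} ℤ/pℤ` the direct sum of countably many copies of the cyclic group of
order `p` (written multiplicatively, so that it can be paired with `F`), and
`G = H × F`. Then every group topology `τ` on `G` is a product topology: there are a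
group topology `τ_H` on `H` and a group topology `τ_F` on `F` such that `τ` is the
product topology of `(H, τ_H)` and `(F, τ_F)`. -/
theorem groupTopology_on_product_is_product (p : ℕ) (hp : p.Prime)
    (F : Type) [Group F] [Finite F] (hcop : Nat.Coprime (Nat.card F) p)
    (τ : GroupTopology (Multiplicative (DirectSum ℕ fun _ : ℕ => ZMod p) × F)) :
    ∃ (τH : GroupTopology (Multiplicative (DirectSum ℕ fun _ : ℕ => ZMod p)))
      (τF : GroupTopology F),
      τ.toTopologicalSpace =
        @instTopologicalSpaceProd _ _ τH.toTopologicalSpace τF.toTopologicalSpace :=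
  groupTopology_on_product_is_product_general p F hcop τ
end

section
/- (Merzon's lemma) Let G be a group and N a (not necessarily normal) subgroup of G. Let σ and τ be group topologies on G such that: (i) σ ≤ τ (τ is finer than σ); (ii) the subspace topologies induced by σ and τ on N coincide; and (iii) the quotient topologies induced by σ and τ on the left coset space G/N coincide. Then σ = τ. -/
/-!
Let `τ` be the finer topology and `U` a `τ`-neighbourhood of `1`; pick a `τ`-neighbourhood `V`
of `1` with `V * V ⊆ U`. Equality on `N` gives a `σ`-neighbourhood `W` of `1` with `W ∩ N ⊆ V`;
pick a `σ`-neighbourhood `W₁` of `1` with `W₁⁻¹ * W₁ ⊆ W`. Since `G → G ⧸ N` is open, the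
saturation `(V ∩ W₁) * N` is a `τ`-neighbourhood of `1`, hence a `σ`-neighbourhood by equality
of the quotient topologies. Finally `(V ∩ W₁) * N ∩ W₁ ⊆ U`: for `x = v * n` in it,
`n = v⁻¹ * x ∈ W₁⁻¹ * W₁ ∩ N ⊆ V`. So `σ` and `τ` have the same neighbourhoods of `1`.
-/

open OrderDual

/-- The lattice `𝓛_G` of all group topologies on `G`, ordered as in the paper:
`τ ≤ σ` iff `σ` is finer than `τ` (so the discrete topology is the top element).
This is the order dual of Mathlib's `GroupTopology G`. -/
abbrev GroupTopLattice (G : Type*) [Group G] : Type _ := (GroupTopology G)ᵒᵈ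

/-- The underlying topology of an element of `𝓛_G`. -/
def topOf {G : Type*} [Group G] (τ : GroupTopLattice G) : TopologicalSpace G :=
  (ofDual τ).toTopologicalSpace

open Filter Topology TopologicalSpace

theorem exists_mem_nhds_one_inv_mul_mem {G : Type*} [Group G] [TopologicalSpace G]
    [IsTopologicalGroup G] {W : Set G} (hW : W ∈ 𝓝 (1 : G)) :
    ∃ V ∈ 𝓝 (1 : G), ∀ a ∈ V, ∀ b ∈ V, a⁻¹ * b ∈ W := by
  obtain ⟨V, hV, hVW⟩ := exists_nhds_one_split hW
  exact ⟨V ∩ V⁻¹, inter_mem hV (inv_mem_nhds_one G hV), fun a ha b hb => hVW _ ha.2 _ hb.1⟩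

theorem exists_mem_nhds_preimage_subset_of_induced_eq {X Y : Type*}
    {t₁ t₂ : TopologicalSpace X} (f : Y → X) (h : induced f t₁ = induced f t₂) (y : Y)
    {V : Set X} (hV : V ∈ @nhds X t₂ (f y)) :
    ∃ W ∈ @nhds X t₁ (f y), f ⁻¹' W ⊆ f ⁻¹' V := by
  have hfV : f ⁻¹' V ∈ @nhds Y (induced f t₁) y := by
    rw [h, @nhds_induced _ _ t₂]
    exact preimage_mem_comap hV
  rwa [@nhds_induced _ _ t₁] at hfV

theorem QuotientGroup.preimage_image_mk_mem_nhds_of_coinduced_eq {G : Type*} [Group G]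
    (N : Subgroup G) {tσ tτ : TopologicalSpace G} [@IsTopologicalGroup G tτ _]
    (hquot : coinduced (QuotientGroup.mk : G → G ⧸ N) tσ = coinduced QuotientGroup.mk tτ)
    {A : Set G} (hA : A ∈ @nhds G tτ 1) :
    (QuotientGroup.mk : G → G ⧸ N) ⁻¹' (QuotientGroup.mk '' A) ∈ @nhds G tσ 1 := by
  have hmk : Continuous[tσ, coinduced QuotientGroup.mk tτ] (QuotientGroup.mk : G → G ⧸ N) :=
    hquot ▸ continuous_coinduced_rng
  exact @Continuous.tendsto _ _ tσ _ _ hmk 1 _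
    (@QuotientGroup.isOpenMap_coe G tτ _ _ N |>.image_mem_nhds hA)

theorem nhds_one_le_of_induced_eq_of_coinduced_eq {G : Type*} [Group G] (N : Subgroup G)
    {tσ tτ : TopologicalSpace G} [hσ : @IsTopologicalGroup G tσ _]
    [@IsTopologicalGroup G tτ _] (hle : tτ ≤ tσ)
    (hres : induced (Subtype.val : N → G) tσ = induced Subtype.val tτ)
    (hquot : coinduced (QuotientGroup.mk : G → G ⧸ N) tσ = coinduced QuotientGroup.mk tτ) :
    @nhds G tσ 1 ≤ @nhds G tτ 1 := by
  intro U hU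
  obtain ⟨V, hV, hVU⟩ : ∃ V ∈ @nhds G tτ 1, ∀ v ∈ V, ∀ w ∈ V, v * w ∈ U :=
    @exists_nhds_one_split G tτ _ _ U hU
  obtain ⟨W, hW, hWV⟩ :=
    exists_mem_nhds_preimage_subset_of_induced_eq (Subtype.val : N → G) hres 1 hV
  obtain ⟨W₁, hW₁, hW₁W⟩ := @exists_mem_nhds_one_inv_mul_mem G _ tσ hσ W hW
  have hsat := QuotientGroup.preimage_image_mk_mem_nhds_of_coinduced_eq N hquot
    (inter_mem hV (nhds_mono hle hW₁))
  refine mem_of_superset (inter_mem hsat hW₁) ?_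
  rintro x ⟨⟨v, ⟨hvV, hvW₁⟩, hvx⟩, hxW₁⟩
  have hn : v⁻¹ * x ∈ N := QuotientGroup.eq.1 hvx
  simpa using hVU v hvV _ (@hWV ⟨_, hn⟩ (hW₁W v hvW₁ x hxW₁))

/-- Merzon's lemma. Let `G` be a group and `N` a (not necessarily normal)
subgroup of `G`. Let `σ` and `τ` be group topologies on `G` such that: (i) `σ ≤ τ`
(`τ` is finer than `σ`); (ii) the subspace topologies induced by `σ` and `τ` on `N`
coincide; (iii) the quotient topologies induced by `σ` and `τ` on the left coset space
`G ⧸ N` coincide. Then `σ = τ`. -/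
theorem merzon_lemma {G : Type*} [Group G] (N : Subgroup G) (σ τ : GroupTopLattice G)
    (hle : σ ≤ τ)
    (hres : TopologicalSpace.induced (Subtype.val : N → G) (topOf σ) =
      TopologicalSpace.induced (Subtype.val : N → G) (topOf τ))
    (hquot : TopologicalSpace.coinduced (QuotientGroup.mk : G → G ⧸ N) (topOf σ) =
      TopologicalSpace.coinduced (QuotientGroup.mk : G → G ⧸ N) (topOf τ)) :
    σ = τ := by
  have hσ : @IsTopologicalGroup G (topOf σ) _ := (ofDual σ).toIsTopologicalGroup
  have hτ : @IsTopologicalGroup G (topOf τ) _ := (ofDual τ).toIsTopologicalGroup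
  have hle' : topOf τ ≤ topOf σ := hle
  refine GroupTopology.toTopologicalSpace_injective (IsTopologicalGroup.ext hσ hτ ?_)
  exact le_antisymm
    (nhds_one_le_of_induced_eq_of_coinduced_eq (tσ := topOf σ) (tτ := topOf τ) N hle' hres hquot)
    (@nhds_mono _ _ _ _ hle')
end

section
/- Let G be a group and N a normal subgroup of G. For every pair of group topologies σ, τ on G, the quotient topology on G/N induced by the meet σ ∧ τ (taken in the lattice of group topologies on G) equals the meet, in the lattice of group topologies on G/N, of the quotient topologies σ/N and τ/N; that is, (σ ∧ τ)/N = σ/N ∧ τ/N. -/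
/-!
Quotienting by `N` is the coinduced topology along `G → G ⧸ N`, which is left adjoint to pulling
topologies back along that map; pullbacks of group topologies along homomorphisms are again group
topologies, so the adjunction lives in the lattices of group topologies. Left adjoints preserve
joins, and the meet of the paper's lattice is the join of Mathlib's `GroupTopology`.
-/

open OrderDual

/-- The quotient group topology `τ/N` on `G ⧸ N`, for `N` a normal subgroup,
as an element of `𝓛_{G/N}`. -/
def quotTop {G : Type*} [Group G] (τ : GroupTopLattice G) (N : Subgroup G) [N.Normal] :
    GroupTopLattice (G ⧸ N) :=
  toDual <|
    letI := (ofDual τ).toTopologicalSpace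
    haveI := (ofDual τ).toIsTopologicalGroup
    ({ toTopologicalSpace := inferInstance, toIsTopologicalGroup := inferInstance } :
      GroupTopology (G ⧸ N))

namespace GroupTopology

def comap_s5 {G H : Type*} [Group G] [Group H] (f : G →* H) (t : GroupTopology H) :
    GroupTopology G :=
  letI := t.toTopologicalSpace
  haveI := t.toIsTopologicalGroup
  { toTopologicalSpace := .induced f t.toTopologicalSpace
    toIsTopologicalGroup := topologicalGroup_induced f }

section Quotient

variable {G : Type*} [Group G] (N : Subgroup G) [N.Normal]

def quotient (t : GroupTopology G) : GroupTopology (G ⧸ N) :=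
  letI := t.toTopologicalSpace
  haveI := t.toIsTopologicalGroup
  { toTopologicalSpace := inferInstance, toIsTopologicalGroup := inferInstance }

theorem gc_quotient_comap : GaloisConnection (quotient N) (comap_s5 (QuotientGroup.mk' N)) := by
  intro t s
  rw [← toTopologicalSpace_le, ← toTopologicalSpace_le]
  exact coinduced_le_iff_le_induced

theorem quotient_sup (s t : GroupTopology G) :
    quotient N (s ⊔ t) = quotient N s ⊔ quotient N t :=
  (gc_quotient_comap N).l_sup

end Quotient

end GroupTopology

/-- Let `G` be a group and `N` a normal subgroup of `G`. For every pair of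
group topologies `σ, τ` on `G`, the quotient topology on `G ⧸ N` induced by the meet
`σ ⊓ τ` (in the lattice of group topologies on `G`) equals the meet, in the lattice of
group topologies on `G ⧸ N`, of the quotient topologies: `(σ ⊓ τ)/N = σ/N ⊓ τ/N`. -/
theorem quot_inf (G : Type*) [Group G] (N : Subgroup G) [N.Normal]
    (σ τ : GroupTopLattice G) :
    quotTop (σ ⊓ τ) N = quotTop σ N ⊓ quotTop τ N :=
  congrArg toDual (GroupTopology.quotient_sup N (ofDual σ) (ofDual τ))
end

section
/- Let G be a group with a central subgroup N, and let τ, σ be group topologies on G such that σ/N ≤ τ/N in the lattice of group topologies on G/N. If 𝓑_τ is a neighbourhood basis at the identity e in (G, τ) and 𝓑_σ is a neighbourhood basis at e in (G, σ), then the family 𝓑 = { U·V : U ∈ 𝓑_τ, V ∈ 𝓑_σ } of pointwise products forms a neighbourhood basis at e for the topology σ ∧ τ, the meet of σ and τ in the lattice of group topologies on G. -/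
open OrderDual Pointwise

/-! The products `U * V` in question form the filter `𝓝_τ 1 * 𝓝_σ 1`. A product `f * g` of
neighbourhood filters of `1` of group topologies is again one as soon as `g * f ≤ f * g`, and
then the group topology it defines is the finest one coarser than both, i.e. their meet.
The commutation is where `N` enters: by the hypothesis on quotients a `τ`-small `u` lies in
`w * N` for a `σ`-small `w`, and since `N` is central, `v * u = u * (w⁻¹ * v * w)`, where
`w⁻¹ * v * w` is `σ`-small whenever `v` is. -/

open Filter Topology

local notation "𝓝₁[" t "]" => @nhds _ (GroupTopology.toTopologicalSpace t) 1

section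

variable {G : Type*} [Group G]

structure IsNhdsOneFilter (f : Filter G) : Prop where
  pure_le : pure 1 ≤ f
  mul_le : f * f ≤ f
  inv_le : f⁻¹ ≤ f
  tendsto_conj : ∀ x : G, Tendsto (fun y => x * y * x⁻¹) f f

namespace IsNhdsOneFilter

theorem nhds_one [TopologicalSpace G] [IsTopologicalGroup G] : IsNhdsOneFilter (𝓝 (1 : G)) where
  pure_le := pure_le_nhds 1
  mul_le := (nhds_mul_nhds_one 1).le
  inv_le := by rw [← nhds_inv, inv_one]
  tendsto_conj x :=
    ((continuous_const_mul x).mul continuous_const : Continuous fun y => x * y * x⁻¹).tendsto'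
      1 1 (by simp)

theorem mul {f g : Filter G} (hf : IsNhdsOneFilter f) (hg : IsNhdsOneFilter g)
    (hcomm : g * f ≤ f * g) : IsNhdsOneFilter (f * g) where
  pure_le := by
    rw [← one_mul (1 : G), ← pure_mul_pure]
    exact mul_le_mul' hf.pure_le hg.pure_le
  mul_le := calc
    f * g * (f * g) = f * (g * f) * g := by simp only [mul_assoc]
    _ ≤ f * (f * g) * g := by gcongr
    _ = (f * f) * (g * g) := by simp only [mul_assoc]
    _ ≤ f * g := mul_le_mul' hf.mul_le hg.mul_le
  inv_le := calc
    (f * g)⁻¹ = g⁻¹ * f⁻¹ := mul_inv_rev f g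
    _ ≤ g * f := mul_le_mul' hg.inv_le hf.inv_le
    _ ≤ f * g := hcomm
  tendsto_conj x := by
    have hmap : map (fun y => x * y * x⁻¹) (f * g) = _ := Filter.map_mul (MulAut.conj x)
    exact hmap.trans_le (mul_le_mul' (hf.tendsto_conj x) (hg.tendsto_conj x))

abbrev groupFilterBasis {f : Filter G} (hf : IsNhdsOneFilter f) : GroupFilterBasis G where
  toFilterBasis := f.asBasis
  one' hU := hf.pure_le hU
  mul' hU := by
    obtain ⟨V, hV, W, hW, hVW⟩ := hf.mul_le hU
    exact ⟨V ∩ W, inter_mem hV hW,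
      (Set.mul_subset_mul Set.inter_subset_left Set.inter_subset_right).trans hVW⟩
  inv' hU := ⟨_, hf.inv_le hU, subset_rfl⟩
  conj' x _ hU := ⟨_, hf.tendsto_conj x hU, subset_rfl⟩

def groupTopology {f : Filter G} (hf : IsNhdsOneFilter f) : GroupTopology G :=
  ⟨hf.groupFilterBasis.topology, hf.groupFilterBasis.isTopologicalGroup⟩

theorem nhds_one_groupTopology {f : Filter G} (hf : IsNhdsOneFilter f) :
    𝓝₁[hf.groupTopology] = f :=
  hf.groupFilterBasis.nhds_one_eq.trans f.asBasis_filter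

theorem exists_inv_mul_mul_subset {g : Filter G} (hg : IsNhdsOneFilter g) {V : Set G}
    (hV : V ∈ g) : ∃ W ∈ g, W⁻¹ * W * W ⊆ V := by
  have h3 : g⁻¹ * g * g ≤ g := calc
    g⁻¹ * g * g ≤ g * g * g := by gcongr; exact hg.inv_le
    _ ≤ g := (mul_le_mul' hg.mul_le le_rfl).trans hg.mul_le
  obtain ⟨A, ⟨C, hC, D, hD, hCD⟩, B, hB, hAB⟩ := h3 hV
  refine ⟨C⁻¹ ∩ D ∩ B, inter_mem (inter_mem (mem_inv.mp hC) hD) hB, ?_⟩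
  have hWC : (C⁻¹ ∩ D ∩ B)⁻¹ ⊆ C :=
    Set.inv_subset.mpr (Set.inter_subset_left.trans Set.inter_subset_left)
  have hWD : C⁻¹ ∩ D ∩ B ⊆ D := Set.inter_subset_left.trans Set.inter_subset_right
  exact (Set.mul_subset_mul (Set.mul_subset_mul hWC hWD) Set.inter_subset_right).trans
    ((Set.mul_subset_mul hCD subset_rfl).trans hAB)

theorem mul_swap_le_of_le_comap_map {N : Subgroup G} (hN : N ≤ Subgroup.center G)
    {f g : Filter G} (hg : IsNhdsOneFilter g)
    (hf : f ≤ comap ((↑) : G → G ⧸ N) (map (↑) g)) : g * f ≤ f * g := by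
  rintro s ⟨U, hU, V, hV, hUV⟩
  obtain ⟨W, hW, hWV⟩ := hg.exists_inv_mul_mul_subset hV
  refine ⟨W, hW, U ∩ (↑) ⁻¹' (((↑) : G → G ⧸ N) '' W),
    inter_mem hU (hf (preimage_mem_comap (image_mem_map hW))), ?_⟩
  rintro _ ⟨v, hv, u, ⟨hu, w, hw, hwu⟩, rfl⟩
  have hcomm : ∀ x : G, x * (w⁻¹ * u) = (w⁻¹ * u) * x :=
    Subgroup.mem_center_iff.mp (hN (QuotientGroup.eq.mp hwu))
  have hvu : v * u = u * (w⁻¹ * v * w) := calc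
    v * u = (v * w) * (w⁻¹ * u) := by group
    _ = (w⁻¹ * u) * (v * w) := hcomm (v * w)
    _ = (w * (w⁻¹ * u)) * (w⁻¹ * v * w) := by rw [hcomm w]; group
    _ = u * (w⁻¹ * v * w) := by group
  show v * u ∈ s
  rw [hvu]
  exact hUV (Set.mul_mem_mul hu
    (hWV (Set.mul_mem_mul (Set.mul_mem_mul (Set.inv_mem_inv.mpr hw) hv) hw)))


end IsNhdsOneFilter

namespace GroupTopology

theorem le_iff_nhds_one_le {t s : GroupTopology G} : t ≤ s ↔ 𝓝₁[t] ≤ 𝓝₁[s] := by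
  rw [← toTopologicalSpace_le, le_iff_nhds]
  refine ⟨fun h => h 1, fun h x => ?_⟩
  have hx (r : GroupTopology G) : @nhds G r.toTopologicalSpace x = map (x * ·) 𝓝₁[r] :=
    letI := r.toTopologicalSpace
    haveI := r.toIsTopologicalGroup
    (map_mul_left_nhds_one x).symm
  rw [hx, hx]
  exact map_mono h

theorem isNhdsOneFilter_nhds_one (t : GroupTopology G) : IsNhdsOneFilter 𝓝₁[t] :=
  @IsNhdsOneFilter.nhds_one G _ t.toTopologicalSpace t.toIsTopologicalGroup

theorem nhds_one_sup {t s : GroupTopology G} (hcomm : 𝓝₁[s] * 𝓝₁[t] ≤ 𝓝₁[t] * 𝓝₁[s]) :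
    𝓝₁[t ⊔ s] = 𝓝₁[t] * 𝓝₁[s] := by
  have hts := t.isNhdsOneFilter_nhds_one.mul s.isNhdsOneFilter_nhds_one hcomm
  refine le_antisymm ?_ ?_
  · rw [← hts.nhds_one_groupTopology]
    refine le_iff_nhds_one_le.mp (sup_le ?_ ?_)
    · rw [le_iff_nhds_one_le, hts.nhds_one_groupTopology]
      exact le_mul_of_one_le_right' s.isNhdsOneFilter_nhds_one.pure_le
    · rw [le_iff_nhds_one_le, hts.nhds_one_groupTopology]
      exact le_mul_of_one_le_left' t.isNhdsOneFilter_nhds_one.pure_le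
  · calc 𝓝₁[t] * 𝓝₁[s] ≤ 𝓝₁[t ⊔ s] * 𝓝₁[t ⊔ s] :=
          mul_le_mul' (le_iff_nhds_one_le.mp le_sup_left) (le_iff_nhds_one_le.mp le_sup_right)
      _ ≤ 𝓝₁[t ⊔ s] := (t ⊔ s).isNhdsOneFilter_nhds_one.mul_le

end GroupTopology

theorem nhds_one_le_comap_map_of_quotTop_le {N : Subgroup G} [N.Normal]
    {τ σ : GroupTopLattice G} (hq : quotTop σ N ≤ quotTop τ N) :
    𝓝₁[ofDual τ] ≤ comap ((↑) : G → G ⧸ N) (map (↑) 𝓝₁[ofDual σ]) := by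
  have hquot (ρ : GroupTopLattice G) :
      𝓝₁[ofDual (quotTop ρ N)] = map ((↑) : G → G ⧸ N) 𝓝₁[ofDual ρ] := by
    let := (ofDual ρ).toTopologicalSpace
    have := (ofDual ρ).toIsTopologicalGroup
    exact QuotientGroup.nhds_eq N 1
  rw [← map_le_iff_le_comap, ← hquot, ← hquot]
  exact nhds_mono (GroupTopology.toTopologicalSpace_le.mpr hq)

end

/-- Let `G` be a group with a central subgroup `N` (automatically normal),
and let `τ, σ` be group topologies on `G` such that `σ/N ≤ τ/N` in the lattice of group
topologies on `G ⧸ N`. If `𝓑_τ` is a neighbourhood basis at the identity in `(G, τ)` and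
`𝓑_σ` is a neighbourhood basis at the identity in `(G, σ)`, then the family
`{U * V : U ∈ 𝓑_τ, V ∈ 𝓑_σ}` of pointwise products is a neighbourhood basis at the
identity for the meet `σ ⊓ τ` in the lattice of group topologies on `G`. -/
theorem nhds_basis_of_inf {G : Type*} [Group G] (N : Subgroup G) [N.Normal]
    (hc : N ≤ Subgroup.center G) (τ σ : GroupTopLattice G)
    (hq : quotTop σ N ≤ quotTop τ N)
    (Bτ Bσ : Set (Set G))
    (hBτ : (@nhds G (topOf τ) 1).HasBasis (· ∈ Bτ) id)
    (hBσ : (@nhds G (topOf σ) 1).HasBasis (· ∈ Bσ) id) :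
    (@nhds G (topOf (σ ⊓ τ)) 1).HasBasis
      (fun P : Set G × Set G => P.1 ∈ Bτ ∧ P.2 ∈ Bσ) (fun P => P.1 * P.2) := by
  have hswap := (GroupTopology.isNhdsOneFilter_nhds_one (ofDual σ)).mul_swap_le_of_le_comap_map
    hc (nhds_one_le_comap_map_of_quotTop_le hq)
  have hmeet : @nhds G (topOf (σ ⊓ τ)) 1 = 𝓝₁[ofDual τ] * 𝓝₁[ofDual σ] := by
    rw [← GroupTopology.nhds_one_sup hswap, sup_comm]
    rfl
  rw [hmeet]
  exact hBτ.mul hBσ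
end

section
/- Let G be a group, N a normal subgroup of G, and σ, τ group topologies on G. Let τ* denote the group topology on G obtained as the initial topology induced by the canonical projection G → (G/N, τ/N); equivalently, τ* has as a neighbourhood basis at the identity the family {U·N : U is a τ-neighbourhood of the identity}. Then (σ ∨ τ*)/N = σ/N ∨ τ/N, where the joins are taken in the lattices of group topologies on G and on G/N respectively. -/
open OrderDual

section InfInduced

variable {X Y : Type*} (q : X → Y) {s : TopologicalSpace X} {t b : TopologicalSpace Y}

lemma IsOpenMap.inf_induced (hq : @IsOpenMap X Y s t q) :
    @IsOpenMap X Y (s ⊓ b.induced q) (t ⊓ b) q := by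
  rw [@isOpenMap_iff_nhds_le] at hq ⊢
  intro x
  calc @nhds Y (t ⊓ b) (q x) = @nhds Y t (q x) ⊓ @nhds Y b (q x) := @nhds_inf Y t b (q x)
    _ ≤ (@nhds X s x).map q ⊓ @nhds Y b (q x) := inf_le_inf_right _ (hq x)
    _ = ((@nhds X s x) ⊓ (@nhds Y b (q x)).comap q).map q := (Filter.push_pull ..).symm
    _ = (@nhds X (s ⊓ b.induced q) x).map q := by
      rw [@nhds_inf X s (b.induced q) x, @nhds_induced Y X b q x]

lemma coinduced_inf_induced_of_isOpenMap (hsurj : Function.Surjective q)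
    (hq : @IsOpenMap X Y s (s.coinduced q) q) :
    (s ⊓ b.induced q).coinduced q = s.coinduced q ⊓ b := by
  have hcont : @Continuous X Y (s ⊓ b.induced q) (s.coinduced q ⊓ b) q :=
    (@continuous_inf_rng X Y q _ (s.coinduced q) b).mpr
      ⟨@continuous_inf_dom_left X Y q s (b.induced q) _ (@continuous_coinduced_rng X Y q s),
        @continuous_inf_dom_right X Y q s _ b (@continuous_induced_dom X Y q b)⟩
  obtain ⟨⟨h_eq⟩, -⟩ := @IsOpenMap.isQuotientMap X Y q (s ⊓ b.induced q) (s.coinduced q ⊓ b)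
    (hq.inf_induced q) hcont hsurj
  exact h_eq.symm

end InfInduced

section GroupTopLattice

variable {G : Type*} [Group G]

lemma topOf_injective : Function.Injective (topOf : GroupTopLattice G → TopologicalSpace G) :=
  GroupTopology.toTopologicalSpace_injective

lemma topOf_sup (σ τ : GroupTopLattice G) : topOf (σ ⊔ τ) = topOf σ ⊓ topOf τ :=
  GroupTopology.toTopologicalSpace_inf (ofDual σ) (ofDual τ)

variable (N : Subgroup G) [N.Normal]

lemma topOf_quotTop (τ : GroupTopLattice G) :
    topOf (quotTop τ N) = (topOf τ).coinduced (QuotientGroup.mk : G → G ⧸ N) :=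
  rfl

lemma isOpenMap_quotientGroup_mk (τ : GroupTopLattice G) :
    @IsOpenMap G (G ⧸ N) (topOf τ) (topOf (quotTop τ N)) QuotientGroup.mk :=
  letI := topOf τ
  haveI : IsTopologicalGroup G := (ofDual τ).toIsTopologicalGroup
  QuotientGroup.isOpenMap_coe

end GroupTopLattice

/-- Let `G` be a group, `N` a normal subgroup, and `σ, τ` group topologies
on `G`. Let `τ*` be the group topology on `G` whose underlying topology is the initial
topology induced by the canonical projection `G → (G ⧸ N, τ/N)`. Then
`(σ ⊔ τ*)/N = σ/N ⊔ τ/N`, the joins being taken in the lattices of group topologies on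
`G` and on `G ⧸ N` respectively. -/
theorem quot_sup_initial {G : Type*} [Group G] (N : Subgroup G) [N.Normal]
    (σ τ τstar : GroupTopLattice G)
    (hstar : topOf τstar =
      TopologicalSpace.induced (QuotientGroup.mk : G → G ⧸ N) (topOf (quotTop τ N))) :
    quotTop (σ ⊔ τstar) N = quotTop σ N ⊔ quotTop τ N := by
  apply topOf_injective
  rw [topOf_sup, topOf_quotTop, topOf_sup, hstar, topOf_quotTop N σ]
  exact coinduced_inf_induced_of_isOpenMap _ QuotientGroup.mk_surjective
    (isOpenMap_quotientGroup_mk N σ)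
end

section
/- Let p be a prime and let G = (ℤ/pℤ)^ℕ be the countable power of the cyclic group of order p, equipped with the product topology (each factor discrete). Then there exist subgroups A ≤ B of G, with A dense in G, and two non-refinable chains of subgroups of G with smallest element A and largest element B, all of whose members are dense in G, such that one chain has cardinality ℵ₀ and the other has cardinality 2^ℵ₀. -/
/-- `C` is a non-refinable (i.e. maximal) chain in the interval `[a, b]` with smallest
element `a` and largest element `b`: it is a chain contained in `[a, b]`, containing both
endpoints, and admitting no proper refinement, i.e. no chain in `[a, b]` properly
contains it. -/
def IsNonrefinableChainBetween {L : Type*} [PartialOrder L] (a b : L) (C : Set L) : Prop :=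
  a ∈ C ∧ b ∈ C ∧ C ⊆ Set.Icc a b ∧ IsChain (· ≤ ·) C ∧
    ∀ C' : Set L, C ⊆ C' → C' ⊆ Set.Icc a b → IsChain (· ≤ ·) C' → C' = C

/-- The product topology on `G = (ℤ/pℤ)^ℕ`, each factor being discrete. -/
def prodTop (p : ℕ) : TopologicalSpace (ℕ → ZMod p) :=
  @Pi.topologicalSpace ℕ (fun _ => ZMod p) (fun _ => ⊥)

/-!
Let `A` be the finitely supported functions, a dense subgroup. The quotient `G ⧸ A` is an
`𝔽_p`-vector space, and the indicators of the columns `{pair n k | k ∈ ℕ}` of `ℕ ≅ ℕ × ℕ`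
give a countable independent family `(vₙ)` in it. By the correspondence theorem, the subgroups
between `A` and `B := A + span (vₙ)` are the subspaces of `span (vₙ)`, and all of them are dense.

For any linear order on the index set of an independent family, the spans of the lower sets form
a non-refinable chain: a subspace `W` comparable with every `span {vⱼ | j < i}` is the span of
the `vᵢ` it contains. The indices of those `vᵢ` form a lower set, so if some `x ∈ W` lies outside
their span, the largest index `i` in the support of `x` has `vᵢ ∉ W`. Then `W ⊆ span {vⱼ | j < i}`
is impossible since `x` involves `vᵢ`, and the other alternative puts all other terms of `x`, hence
also `vᵢ`, into `W`. Ordering the family as `ℕ` and as `ℚ` gives the two chains, with `ℵ₀`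
and `2 ^ ℵ₀` lower sets respectively.
-/

open Set Submodule

theorem IsNonrefinableChainBetween.image {L L' : Type*} [PartialOrder L] [PartialOrder L']
    {a b : L} {C : Set L} (h : IsNonrefinableChainBetween a b C) (φ : L ↪o L')
    (hφ : Icc (φ a) (φ b) ⊆ range φ) :
    IsNonrefinableChainBetween (φ a) (φ b) (φ '' C) := by
  obtain ⟨ha, hb, hC, hchain, hmax⟩ := h
  refine ⟨mem_image_of_mem φ ha, mem_image_of_mem φ hb, ?_, hchain.image φ, ?_⟩
  · rintro _ ⟨x, hx, rfl⟩
    exact ⟨φ.monotone (hC hx).1, φ.monotone (hC hx).2⟩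
  · intro C' hCC' hC' hchain'
    have hpre : φ ⁻¹' C' = C := by
      refine hmax _ (image_subset_iff.1 hCC') (fun x hx => ?_) (hchain'.preimage_relEmbedding φ)
      exact ⟨φ.le_iff_le.1 (hC' hx).1, φ.le_iff_le.1 (hC' hx).2⟩
    rw [← hpre, image_preimage_eq_of_subset (hC'.trans hφ)]

theorem IsNonrefinableChainBetween.image_orderIso {L L' : Type*} [PartialOrder L]
    [PartialOrder L'] {a b : L} {C : Set L} (h : IsNonrefinableChainBetween a b C)
    (φ : L ≃o L') : IsNonrefinableChainBetween (φ a) (φ b) (φ '' C) :=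
  h.image φ.toOrderEmbedding (by simp [φ.surjective.range_eq])

theorem Submodule.Icc_subset_range_comapMkQOrderEmbedding {R M : Type*} [Ring R]
    [AddCommGroup M] [Module R M] (A : Submodule R M) (W : Submodule R (M ⧸ A)) :
    Icc (comapMkQOrderEmbedding A ⊥) (comapMkQOrderEmbedding A W) ⊆
      range (comapMkQOrderEmbedding A) := by
  intro U hU
  have hAU : A ≤ U := by simpa using hU.1
  exact ⟨map A.mkQ U, by simp [comap_map_mkQ, sup_eq_right.2 hAU]⟩

theorem LinearIndependent.linearCombination_mem_span_image_iff {R V ι : Type*} [Semiring R]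
    [AddCommMonoid V] [Module R V] {v : ι → V} (hv : LinearIndependent R v) {c : ι →₀ R}
    {s : Set ι} :
    Finsupp.linearCombination R v c ∈ span R (v '' s) ↔ ↑c.support ⊆ s := by
  rw [Finsupp.mem_span_image_iff_linearCombination, ← Finsupp.mem_supported R c]
  exact ⟨fun ⟨l, hl, hlc⟩ => hv.finsuppLinearCombination_injective hlc ▸ hl,
    fun hc => ⟨c, hc, rfl⟩⟩

theorem LinearIndependent.span_image_injective {R V ι : Type*} [Ring R] [Nontrivial R]
    [AddCommGroup V] [Module R V] {v : ι → V} (hv : LinearIndependent R v) :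
    Function.Injective fun s : Set ι => span R (v '' s) := by
  intro s t hst
  ext i
  have hmem : ∀ u : Set ι, v i ∈ span R (v '' u) ↔ i ∈ u := fun u =>
    ⟨fun h => by_contra fun hi => hv.notMem_span_image hi h,
      fun hi => subset_span (mem_image_of_mem v hi)⟩
  rw [← hmem s, ← hmem t, show span R (v '' s) = span R (v '' t) from hst]

section LowerSets

variable {K V ι : Type*} [DivisionRing K] [AddCommGroup V] [Module K V] [LinearOrder ι]
  {v : ι → V}

theorem LinearIndependent.isLowerSet_setOf_mem_of_forall_comparable (hv : LinearIndependent K v)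
    {W : Submodule K V} (hcomp : ∀ i, span K (v '' Iio i) ≤ W ∨ W ≤ span K (v '' Iio i)) :
    IsLowerSet {i | v i ∈ W} := by
  intro i j hji hi
  rcases hji.lt_or_eq with hlt | rfl
  · rcases hcomp i with hle | hle
    · exact hle (subset_span (mem_image_of_mem v hlt))
    · exact absurd (hle hi) (hv.notMem_span_image (lt_irrefl i))
  · exact hi

theorem LinearIndependent.eq_span_setOf_mem_of_forall_comparable (hv : LinearIndependent K v)
    {W : Submodule K V} (hW : W ≤ span K (range v))
    (hcomp : ∀ i, span K (v '' Iio i) ≤ W ∨ W ≤ span K (v '' Iio i)) :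
    W = span K (v '' {i | v i ∈ W}) := by
  classical
  refine le_antisymm (fun x hx => ?_) (span_le.2 (image_subset_iff.2 fun _ hi => hi))
  obtain ⟨c, rfl⟩ : x ∈ LinearMap.range (Finsupp.linearCombination K v) := by
    simpa [Finsupp.range_linearCombination] using hW hx
  rw [hv.linearCombination_mem_span_image_iff]
  by_contra hsub
  have hne : c.support.Nonempty :=
    Finset.nonempty_iff_ne_empty.2 fun h => hsub (by simp [h])
  set i₀ := c.support.max' hne
  have hi₀ : i₀ ∈ c.support := c.support.max'_mem hne
  have hi₀W : v i₀ ∉ W := fun h =>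
    hsub fun j hj => hv.isLowerSet_setOf_mem_of_forall_comparable hcomp (c.support.le_max' j hj) h
  have herase : Finsupp.linearCombination K v (c.erase i₀) ∈ span K (v '' Iio i₀) := by
    rw [hv.linearCombination_mem_span_image_iff, Finsupp.support_erase]
    intro j hj
    exact (c.support.le_max' j (Finset.mem_of_mem_erase hj)).lt_of_ne (Finset.ne_of_mem_erase hj)
  have hsplit : Finsupp.linearCombination K v c =
      c i₀ • v i₀ + Finsupp.linearCombination K v (c.erase i₀) := by
    conv_lhs => rw [← Finsupp.single_add_erase i₀ c]
    rw [map_add, Finsupp.linearCombination_single]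
  rcases hcomp i₀ with hle | hle
  · -- everything below `i₀` lies in `W`, so the leading term does too
    refine hi₀W ((smul_mem_iff W (Finsupp.mem_support_iff.1 hi₀)).1 ?_)
    simpa [hsplit] using W.sub_mem hx (hle herase)
  · exact lt_irrefl i₀ (hv.linearCombination_mem_span_image_iff.1 (hle hx) hi₀)

variable (K) in
def spansOfLowerSets (v : ι → V) : Set (Submodule K V) :=
  (fun s => span K (v '' s)) '' {s | IsLowerSet s}

theorem LinearIndependent.isNonrefinableChainBetween_spansOfLowerSets
    (hv : LinearIndependent K v) :
    IsNonrefinableChainBetween ⊥ (span K (range v)) (spansOfLowerSets K v) := by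
  refine ⟨⟨∅, isLowerSet_empty, by simp⟩, ⟨univ, isLowerSet_univ, by simp [image_univ]⟩,
    ?_, ?_, fun C' hC hC' hchain => Subset.antisymm (fun W hW => ?_) hC⟩
  · rintro _ ⟨s, -, rfl⟩
    exact ⟨bot_le, span_mono (image_subset_range v s)⟩
  · rintro _ ⟨s, hs, rfl⟩ _ ⟨t, ht, rfl⟩ -
    exact (hs.total ht).imp (fun h => span_mono (image_mono h)) fun h => span_mono (image_mono h)
  · have hcomp : ∀ i, span K (v '' Iio i) ≤ W ∨ W ≤ span K (v '' Iio i) := fun i =>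
      hchain.total (hC ⟨Iio i, isLowerSet_Iio i, rfl⟩) hW
    exact ⟨_, hv.isLowerSet_setOf_mem_of_forall_comparable hcomp,
      (hv.eq_span_setOf_mem_of_forall_comparable (hC' hW).2 hcomp).symm⟩

end LowerSets

theorem mk_setOf_isLowerSet_nat : Cardinal.mk {s : Set ℕ | IsLowerSet s} = Cardinal.aleph0 := by
  have hlower : {s : Set ℕ | IsLowerSet s} = insert univ (range Iio) := by
    ext s
    refine ⟨fun hs => ?_, ?_⟩
    · rcases hs.eq_univ_or_Iio with h | ⟨a, h⟩
      exacts [Or.inl h, Or.inr ⟨a, h.symm⟩]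
    · rintro (rfl | ⟨a, rfl⟩)
      exacts [isLowerSet_univ, isLowerSet_Iio a]
  rw [hlower]
  refine le_antisymm (Cardinal.le_aleph0_iff_set_countable.2 ((countable_range _).insert _)) ?_
  rw [Cardinal.aleph0_le_mk_iff, infinite_coe_iff]
  exact (infinite_range_of_injective Iio_injective).mono (subset_insert _ _)

theorem mk_setOf_isLowerSet_rat :
    Cardinal.mk {s : Set ℚ | IsLowerSet s} = 2 ^ Cardinal.aleph0 := by
  refine le_antisymm ?_ ?_
  · calc Cardinal.mk {s : Set ℚ | IsLowerSet s} ≤ Cardinal.mk (Set ℚ) := Cardinal.mk_set_le _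
      _ = 2 ^ Cardinal.aleph0 := by rw [Cardinal.mk_set, Cardinal.mk_denumerable]
  · -- Dedekind cuts: distinct reals are separated by a rational
    let cut (r : ℝ) : {s : Set ℚ | IsLowerSet s} :=
      ⟨{q | (q : ℝ) < r}, fun a b hba ha =>
        show (b : ℝ) < r from (Rat.cast_le.2 hba).trans_lt ha⟩
    have hcut : ∀ r r' : ℝ, (cut r : Set ℚ) ⊆ cut r' → r ≤ r' := fun r r' h =>
      le_of_not_gt fun hlt =>
        let ⟨q, hq', hq⟩ := exists_rat_btwn hlt
        (h hq).not_gt hq'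
    calc 2 ^ Cardinal.aleph0 = Cardinal.mk ℝ := by
          rw [Cardinal.mk_real, Cardinal.two_power_aleph0]
      _ ≤ Cardinal.mk {s : Set ℚ | IsLowerSet s} := Cardinal.mk_le_of_injective fun r r' h =>
        le_antisymm (hcut r r' (congrArg Subtype.val h).le) (hcut r' r (congrArg Subtype.val h).ge)

section FinitelySupported

variable (α R : Type*) [Semiring R]

noncomputable def finitelySupported : Submodule R (α → R) :=
  LinearMap.range (Finsupp.lcoeFun : (α →₀ R) →ₗ[R] α → R)

theorem dense_finitelySupported [TopologicalSpace R] :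
    Dense (finitelySupported α R : Set (α → R)) := by
  classical
  intro f
  refine mem_closure_of_tendsto (f := fun F : Finset α => (F : Set α).indicator f)
    (b := Filter.atTop) ?_ (Filter.Eventually.of_forall fun F => ?_)
  · rw [tendsto_pi_nhds]
    intro a
    refine tendsto_const_nhds.congr' ?_
    filter_upwards [Filter.eventually_ge_atTop {a}] with F hF
    exact (indicator_of_mem (hF (Finset.mem_singleton_self a)) f).symm
  · exact ⟨Finsupp.ofSupportFinite _ (F.finite_toSet.subset (Set.support_indicator_subset)),
      rfl⟩

def column (n : ℕ) : ℕ → R := fun m => if (Nat.unpair m).1 = n then 1 else 0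

end FinitelySupported

theorem linearIndependent_mkQ_comp_column (R : Type*) [Ring R] :
    LinearIndependent R ((finitelySupported ℕ R).mkQ ∘ column R) := by
  classical
  rw [linearIndependent_iff']
  intro s g hg i hi
  by_contra hgi
  obtain ⟨f, hf⟩ : ∑ j ∈ s, g j • column R j ∈ finitelySupported ℕ R := by
    rw [← Submodule.Quotient.mk_eq_zero, ← Submodule.mkQ_apply, map_sum]
    simpa using hg
  have hcol : ∀ k, f (Nat.pair i k) = g i := fun k => by
    rw [show ⇑f = _ from hf]
    simp [column, Finset.sum_apply, hi]
  refine (infinite_range_of_injective (f := Nat.pair i) fun k l h => (Nat.pair_eq_pair.1 h).2).mono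
    ?_ f.support.finite_toSet
  rintro _ ⟨k, rfl⟩
  simpa [hcol k] using hgi

/-- Let `p` be a prime and `G = (ℤ/pℤ)^ℕ` the countable power of the
cyclic group of order `p`, with the product topology (each factor discrete). Then there
exist subgroups `A ≤ B` of `G`, with `A` dense in `G`, and two non-refinable chains of
subgroups of `G` with smallest element `A` and largest element `B`, all of whose members
are dense in `G`, such that one chain has cardinality `ℵ₀` and the other `2 ^ ℵ₀`. -/
theorem exists_nonrefinable_chains_of_dense_subgroups (p : ℕ) (hp : p.Prime) :
    ∃ A B : AddSubgroup (ℕ → ZMod p), A ≤ B ∧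
      @Dense (ℕ → ZMod p) (prodTop p) (A : Set (ℕ → ZMod p)) ∧
      ∃ C₁ C₂ : Set (AddSubgroup (ℕ → ZMod p)),
        IsNonrefinableChainBetween A B C₁ ∧ IsNonrefinableChainBetween A B C₂ ∧
        (∀ K ∈ C₁ ∪ C₂, @Dense (ℕ → ZMod p) (prodTop p) (K : Set (ℕ → ZMod p))) ∧
        Cardinal.mk C₁ = Cardinal.aleph0 ∧ Cardinal.mk C₂ = 2 ^ Cardinal.aleph0 := by
  have : Fact p.Prime := ⟨hp⟩
  let : TopologicalSpace (ZMod p) := ⊥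
  set A := finitelySupported ℕ (ZMod p)
  set v := A.mkQ ∘ column (ZMod p)
  have hv : LinearIndependent (ZMod p) v := linearIndependent_mkQ_comp_column (ZMod p)
  have hvℚ := hv.comp _ (Denumerable.eqv ℚ).injective
  set φ := comapMkQOrderEmbedding A
  set ψ := (AddSubgroup.toZModSubmodule p (M := ℕ → ZMod p)).symm
  have h₁ := (hv.isNonrefinableChainBetween_spansOfLowerSets.image φ
    (A.Icc_subset_range_comapMkQOrderEmbedding _)).image_orderIso ψ
  have h₂ := (hvℚ.isNonrefinableChainBetween_spansOfLowerSets.image φ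
    (A.Icc_subset_range_comapMkQOrderEmbedding _)).image_orderIso ψ
  rw [EquivLike.range_comp] at h₂
  have hdense : ∀ K, ψ (φ ⊥) ≤ K → Dense (K : Set (ℕ → ZMod p)) := fun K hK =>
    (dense_finitelySupported ℕ (ZMod p)).mono fun x hx => hK (by simpa [ψ, φ] using hx)
  refine ⟨_, _, ψ.monotone (φ.monotone bot_le), hdense _ le_rfl, _, _, h₁, h₂,
    fun K hK => hdense K (hK.elim (fun h => (h₁.2.2.1 h).1) fun h => (h₂.2.2.1 h).1), ?_, ?_⟩
  · rw [Cardinal.mk_image_eq ψ.injective, Cardinal.mk_image_eq φ.injective, spansOfLowerSets,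
      Cardinal.mk_image_eq hv.span_image_injective, mk_setOf_isLowerSet_nat]
  · rw [Cardinal.mk_image_eq ψ.injective, Cardinal.mk_image_eq φ.injective, spansOfLowerSets,
      Cardinal.mk_image_eq hvℚ.span_image_injective, mk_setOf_isLowerSet_rat]
end

section
/- Let G be an abelian group endowed with a maximal group topology τ (i.e., τ is a Hausdorff non-discrete group topology such that the only group topology strictly finer than τ is the discrete topology). Then the topological group (G, τ) is not first-countable. -/
/-!
In Mathlib's order on `GroupTopology G` (finer is smaller) a maximal group topology `τ` is an
atom. If a sequence `u n ≠ 1` tends to `1` both for `τ` and for a group topology `T`, then `τ ⊓ T`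
is a non-discrete group topology finer than `τ`, hence equal to `τ`: so `τ` is finer than `T`.

For an abelian group and a sequence `d`, the products `∏ d l ^ c l` with `|c l| ≤ 2 ^ (l - m)`
form, as `m` varies, a neighbourhood basis of `1` for a group topology `T` in which `d → 1`. If
`τ` had a countable basis `W n` at `1`, one could choose `d n → 1` recursively so that the set with
`m = 0` is not a `τ`-neighbourhood, contradicting `τ ≤ T`: the products of `d 0, …, d (n - 1)` with
admissible exponents form a finite set `F`, some `w ∈ W n` avoids `F * W q` for `q` large, and
choosing the later `d l` small enough puts every admissible product in `F * W q`.
-/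

open OrderDual

open Filter Set Topology Pointwise

theorem exists_seq_forall_prefix {α : Type*} (P : ∀ n, (Fin n → α) → α → Prop)
    (h : ∀ n s, ∃ a, P n s a) : ∃ a : ℕ → α, ∀ n, P n (fun i => a i) (a n) := by
  choose f hf using h
  let a : ℕ → α := Nat.strongRec fun n rec => f n fun i => rec i i.2
  refine ⟨a, fun n => ?_⟩
  rw [show a n = f n (fun i => a i) from Nat.strongRec_eq _ n]
  exact hf _ _

section HalvingSequence

variable {G : Type*} {W : ℕ → Set G}

theorem zpow_mem_of_mem_add [Group G] (hone : ∀ n, (1 : G) ∈ W n) (hinv : ∀ n, (W n)⁻¹ ⊆ W n)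
    (hmul : ∀ n, W (n + 1) * W (n + 1) ⊆ W n) {x : G} {k r : ℕ} (hx : x ∈ W (k + r)) {c : ℤ}
    (hc : |c| ≤ 2 ^ r) : x ^ c ∈ W k := by
  induction r generalizing k c with
  | zero =>
    obtain rfl | rfl | rfl : c = -1 ∨ c = 0 ∨ c = 1 := by rw [abs_le] at hc; omega
    · simpa using hinv k (inv_mem_inv.2 hx)
    · simpa using hone k
    · simpa using hx
  | succ r ih =>
    have hx' : x ∈ W (k + 1 + r) := by rwa [add_right_comm, add_assoc]
    rw [abs_le, pow_succ] at hc
    rw [← add_sub_cancel (c / 2) c, zpow_add]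
    exact hmul k (mul_mem_mul (ih hx' (by rw [abs_le]; omega)) (ih hx' (by rw [abs_le]; omega)))

theorem prod_mem_of_forall_mem_succ [CommMonoid G] (hone : ∀ n, (1 : G) ∈ W n)
    (hmul : ∀ n, W (n + 1) * W (n + 1) ⊆ W n) (hanti : Antitone W) {x : ℕ → G} {S : Finset ℕ}
    {t : ℕ} (hS : ∀ j ∈ S, t ≤ j) (hx : ∀ j ∈ S, x j ∈ W (j + 1)) : ∏ j ∈ S, x j ∈ W t := by
  induction S using Finset.induction_on_min generalizing t with
  | empty => simpa using hone t
  | insert a S haS ih =>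
    rw [Finset.prod_insert fun ha => (haS a ha).false]
    have hrest : ∏ j ∈ S, x j ∈ W (a + 1) :=
      ih (fun j hj => haS j hj) fun j hj => hx j (Finset.mem_insert_of_mem hj)
    exact hanti (hS a (Finset.mem_insert_self a S))
      (hmul a (mul_mem_mul (hx a (Finset.mem_insert_self a S)) hrest))

end HalvingSequence

section BoundedProducts

variable {G : Type*} [CommGroup G]

/-- The condition `|c l| * 2 ^ m ≤ 2 ^ l` says `|c l| ≤ 2 ^ (l - m)` for `l ≥ m` and `c l = 0`
for `l < m`. -/
def boundedProducts (d : ℕ → G) (m : ℕ) : Set G :=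
  {g | ∃ c : ℕ →₀ ℤ, (∀ l, |c l| * 2 ^ m ≤ 2 ^ l) ∧ c.prod (fun l k => d l ^ k) = g}

def boundedProductsFin {n : ℕ} (s : Fin n → G) : Set G :=
  {g | ∃ c : Fin n → ℤ, (∀ i, |c i| ≤ 2 ^ (i : ℕ)) ∧ ∏ i, s i ^ c i = g}

theorem boundedProductsFin_finite {n : ℕ} (s : Fin n → G) : (boundedProductsFin s).Finite := by
  have hc : (Set.pi univ fun i : Fin n => Icc (-2 ^ (i : ℕ) : ℤ) (2 ^ (i : ℕ))).Finite :=
    Set.Finite.pi fun _ => finite_Icc _ _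
  refine (hc.image fun c => ∏ i, s i ^ c i).subset ?_
  rintro _ ⟨c, hcb, rfl⟩
  exact ⟨c, fun i _ => abs_le.1 (hcb i), rfl⟩

theorem mul_mem_boundedProducts {d : ℕ → G} {m : ℕ} {a b : G}
    (ha : a ∈ boundedProducts d (m + 1)) (hb : b ∈ boundedProducts d (m + 1)) :
    a * b ∈ boundedProducts d m := by
  obtain ⟨c, hc, rfl⟩ := ha
  obtain ⟨c', hc', rfl⟩ := hb
  refine ⟨c + c', fun l => ?_, Finsupp.prod_add_index' (fun _ => zpow_zero _) fun _ => zpow_add _⟩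
  have h := hc l
  have h' := hc' l
  rw [pow_succ] at h h'
  calc |(c + c') l| * 2 ^ m ≤ (|c l| + |c' l|) * 2 ^ m := by
        gcongr
        exact abs_add_le _ _
    _ ≤ 2 ^ l := by linarith

theorem inv_mem_boundedProducts {d : ℕ → G} {m : ℕ} {a : G} (ha : a ∈ boundedProducts d m) :
    a⁻¹ ∈ boundedProducts d m := by
  obtain ⟨c, hc, rfl⟩ := ha
  refine ⟨-c, fun l => by simpa using hc l, ?_⟩
  rw [Finsupp.prod_neg_index fun _ => zpow_zero _, ← Finsupp.prod_inv]
  simp only [zpow_neg]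

variable (d : ℕ → G)

theorem one_mem_boundedProducts (m : ℕ) : (1 : G) ∈ boundedProducts d m :=
  ⟨0, fun l => by simp [pow_nonneg], Finsupp.prod_zero_index⟩

theorem boundedProducts_antitone : Antitone (boundedProducts d) := by
  rintro m m' hm _ ⟨c, hc, rfl⟩
  exact ⟨c, fun l => le_trans (by gcongr; exact one_le_two) (hc l), rfl⟩

theorem mem_boundedProducts_of_le {m n : ℕ} (h : m ≤ n) : d n ∈ boundedProducts d m :=
  ⟨Finsupp.single n 1, fun l => by
    rcases eq_or_ne n l with rfl | hl
    · simpa using pow_le_pow_right₀ one_le_two h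
    · simp [hl],
   by rw [Finsupp.prod_single_index (zpow_zero _), zpow_one]⟩

abbrev boundedProductsBasis : GroupFilterBasis G :=
  groupFilterBasisOfComm (range (boundedProducts d)) (range_nonempty _)
    (by
      rintro _ _ ⟨m, rfl⟩ ⟨m', rfl⟩
      exact ⟨_, mem_range_self (max m m'), subset_inter
        (boundedProducts_antitone d (le_max_left m m'))
        (boundedProducts_antitone d (le_max_right m m'))⟩)
    (by rintro _ ⟨m, rfl⟩; exact one_mem_boundedProducts d m)
    (by
      rintro _ ⟨m, rfl⟩
      exact ⟨_, mem_range_self (m + 1),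
        mul_subset_iff.2 fun a ha b hb => mul_mem_boundedProducts ha hb⟩)
    (by rintro _ ⟨m, rfl⟩; exact ⟨_, mem_range_self m, fun a ha => inv_mem_boundedProducts ha⟩)

def boundedProductsTopology : GroupTopology G :=
  ⟨(boundedProductsBasis d).topology, (boundedProductsBasis d).isTopologicalGroup⟩

theorem boundedProducts_mem_nhds (m : ℕ) :
    boundedProducts d m ∈ @nhds G (boundedProductsTopology d).toTopologicalSpace 1 :=
  (boundedProductsBasis d).nhds_one_hasBasis.mem_of_mem (mem_range_self m)

theorem tendsto_boundedProductsTopology :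
    Tendsto d atTop (@nhds G (boundedProductsTopology d).toTopologicalSpace 1) := by
  refine (boundedProductsBasis d).nhds_one_hasBasis.tendsto_right_iff.2 ?_
  rintro _ ⟨m, rfl⟩
  exact eventually_atTop.2 ⟨m, fun n hn => mem_boundedProducts_of_le d hn⟩

end BoundedProducts

theorem IsAtom.le_of_tendsto {G : Type*} [Group G] {τ T : GroupTopology G} (hτ : IsAtom τ)
    {ι : Type*} {l : Filter ι} [l.NeBot] {u : ι → G} (hu : ∀ i, u i ≠ 1)
    (hτu : Tendsto u l (@nhds G τ.toTopologicalSpace 1))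
    (hTu : Tendsto u l (@nhds G T.toTopologicalSpace 1)) : τ ≤ T := by
  have hinf : Tendsto u l (@nhds G (τ ⊓ T).toTopologicalSpace 1) := by
    rw [GroupTopology.toTopologicalSpace_inf, nhds_inf]
    exact tendsto_inf.2 ⟨hτu, hTu⟩
  refine inf_eq_left.1 (inf_le_left.lt_or_eq.resolve_left fun hlt => ?_)
  rw [hτ.2 _ hlt, GroupTopology.toTopologicalSpace_bot] at hinf
  let _ : TopologicalSpace G := ⊥
  have : DiscreteTopology G := ⟨rfl⟩
  obtain ⟨i, hi⟩ := (tendsto_pure.1 (nhds_discrete G ▸ hinf)).exists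
  exact hu i hi

section FirstCountable

variable {G : Type*} [TopologicalSpace G]

theorem IsTopologicalGroup.exists_antitone_basis_nhds_one_inv [Group G] [IsTopologicalGroup G]
    [FirstCountableTopology G] :
    ∃ W : ℕ → Set G, (𝓝 1).HasAntitoneBasis W ∧ (∀ n, W (n + 1) * W (n + 1) ⊆ W n) ∧
      ∀ n, (W n)⁻¹ ⊆ W n := by
  obtain ⟨u, hu, hmul⟩ := IsTopologicalGroup.exists_antitone_basis_nhds_one G
  refine ⟨fun n => u n ∩ (u n)⁻¹, ⟨?_, fun m n h => ?_⟩, fun n => ?_, fun n => ?_⟩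
  · exact hu.1.to_hasBasis' (fun i _ => ⟨i, trivial, inter_subset_left⟩)
      fun i _ => inter_mem (hu.mem i) (inv_mem_nhds_one G (hu.mem i))
  · exact inter_subset_inter (hu.antitone h) (inv_subset_inv.2 (hu.antitone h))
  · refine subset_inter ((mul_subset_mul inter_subset_left inter_subset_left).trans (hmul n)) ?_
    rintro _ ⟨a, ⟨-, ha⟩, b, ⟨-, hb⟩, rfl⟩
    rw [Set.mem_inv, mul_inv_rev]
    exact hmul n (mul_mem_mul hb ha)
  · rw [inter_inv, inv_inv, inter_comm]

theorem Filter.HasAntitoneBasis.eventually_notMem_mul [Group G] [ContinuousMul G]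
    [ContinuousInv G] [T1Space G] {W : ℕ → Set G} (hW : (𝓝 1).HasAntitoneBasis W) {F : Set G}
    (hF : F.Finite) {w : G} (hw : w ∉ F) : ∀ᶠ k in atTop, w ∉ F * W k := by
  have hV : (fun y => w * y⁻¹) ⁻¹' Fᶜ ∈ 𝓝 (1 : G) :=
    (continuous_const.mul continuous_inv).continuousAt.preimage_mem_nhds
      (by simpa using hF.isClosed.isOpen_compl.mem_nhds hw)
  filter_upwards [hW.eventually_subset hV] with k hk
  rintro ⟨f, hf, y, hy, rfl⟩
  exact hk hy (by simpa using hf)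

end FirstCountable

theorem boundedProducts_zero_subset {G : Type*} [CommGroup G] {W : ℕ → Set G}
    (hone : ∀ n, (1 : G) ∈ W n) (hinv : ∀ n, (W n)⁻¹ ⊆ W n)
    (hmul : ∀ n, W (n + 1) * W (n + 1) ⊆ W n) (hanti : Antitone W) {d : ℕ → G} {q : ℕ → ℕ}
    (hq : Monotone q) (hd : ∀ l, d l ∈ W (q l + l + 1 + l)) (n : ℕ) :
    boundedProducts d 0 ⊆ boundedProductsFin (fun i : Fin n => d i) * W (q n) := by
  rintro _ ⟨c, hc, rfl⟩
  rw [Finsupp.prod, ← Finset.prod_filter_mul_prod_filter_not c.support (· < n)]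
  refine mul_mem_mul ⟨fun i => c i, fun i => by simpa using hc i, ?_⟩ ?_
  · rw [Fin.prod_univ_eq_prod_range (fun l => d l ^ c l)]
    refine (Finset.prod_subset (fun l hl => Finset.mem_range.2 (Finset.mem_filter.1 hl).2)
      fun l hl hl' => ?_).symm
    have hcl : c l = 0 := by simpa [Finset.mem_range.1 hl] using hl'
    rw [hcl, zpow_zero]
  · refine prod_mem_of_forall_mem_succ (W := fun k => W (q n + k)) (fun _ => hone _)
      (fun _ => hmul _) (fun _ _ h => hanti (by omega)) (t := 0) (fun j _ => Nat.zero_le j)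
      fun l hl => ?_
    have hnl : n ≤ l := not_lt.1 (Finset.mem_filter.1 hl).2
    exact hanti (by have := hq hnl; omega)
      (zpow_mem_of_mem_add hone hinv hmul (hd l) (by simpa using hc l))

theorem exists_seq_tendsto_one_boundedProducts_notMem_nhds {G : Type*} [CommGroup G]
    [TopologicalSpace G] [IsTopologicalGroup G] [FirstCountableTopology G] [T1Space G]
    [(𝓝[≠] (1 : G)).NeBot] :
    ∃ d : ℕ → G, (∀ n, d n ≠ 1) ∧ Tendsto d atTop (𝓝 1) ∧ boundedProducts d 0 ∉ 𝓝 1 := by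
  obtain ⟨W, hW, hmul, hinv⟩ := IsTopologicalGroup.exists_antitone_basis_nhds_one_inv (G := G)
  have hone : ∀ n, (1 : G) ∈ W n := fun n => mem_of_mem_nhds (hW.mem n)
  -- `a = (q n, d n)` is chosen from the earlier pairs `s i = (q i, d i)`.
  have step : ∀ n (s : Fin n → ℕ × G), ∃ a : ℕ × G, (∀ i, (s i).1 ≤ a.1) ∧ a.2 ≠ 1 ∧
      a.2 ∈ W (a.1 + n + 1 + n) ∧ ¬ W n ⊆ boundedProductsFin (fun i => (s i).2) * W a.1 := by
    intro n s
    obtain ⟨w, hwW, hwF⟩ := (infinite_of_mem_nhds 1 (hW.mem n)).exists_notMem_finite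
      (boundedProductsFin_finite fun i => (s i).2)
    obtain ⟨q, hq, hqF⟩ := ((eventually_ge_atTop (Finset.univ.sup fun i => (s i).1)).and
      (hW.eventually_notMem_mul (boundedProductsFin_finite _) hwF)).exists
    obtain ⟨x, hxW, hx1⟩ := (infinite_of_mem_nhds 1 (hW.mem (q + n + 1 + n))).exists_notMem_finite
      (finite_singleton 1)
    exact ⟨(q, x), fun i => (Finset.le_sup (Finset.mem_univ i)).trans hq, hx1, hxW,
      fun h => hqF (h hwW)⟩
  obtain ⟨a, ha⟩ := exists_seq_forall_prefix _ step
  have hq : Monotone fun n => (a n).1 :=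
    monotone_nat_of_le_succ fun n => (ha (n + 1)).1 (Fin.last n)
  refine ⟨fun n => (a n).2, fun n => (ha n).2.1, ?_, fun hB => ?_⟩
  · refine hW.1.tendsto_right_iff.2 fun i _ => eventually_atTop.2 ⟨i, fun n hn => ?_⟩
    exact hW.antitone (by omega) (ha n).2.2.1
  · obtain ⟨n, -, hn⟩ := hW.1.mem_iff.1 hB
    exact (ha n).2.2.2 (hn.trans (boundedProducts_zero_subset hone hinv hmul hW.antitone hq
      (fun l => (ha l).2.2.1) n))

/-- Let `G` be an abelian group endowed with a maximal group topology
`τ`: a Hausdorff, non-discrete group topology such that the only group topology strictly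
finer than `τ` is the discrete topology `⊤`. Then `(G, τ)` is not first-countable. -/
theorem maximal_topology_not_firstCountable {G : Type*} [CommGroup G]
    (τ : GroupTopLattice G) (hH : @T2Space G (topOf τ)) (hnd : τ ≠ ⊤)
    (hmax : ∀ σ : GroupTopLattice G, τ < σ → σ = ⊤) :
    ¬ @FirstCountableTopology G (topOf τ) := by
  intro _
  let _ : TopologicalSpace G := topOf τ
  have : IsTopologicalGroup G := (ofDual τ).toIsTopologicalGroup
  have hatom : IsAtom (ofDual τ) := isCoatom_dual_iff_isAtom.1 ⟨hnd, hmax⟩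
  have : (𝓝[≠] (1 : G)).NeBot := by
    rw [neBot_iff, Ne, ← isOpen_singleton_iff_punctured_nhds]
    refine fun h => hatom.1 (GroupTopology.toTopologicalSpace_injective ?_)
    rw [GroupTopology.toTopologicalSpace_bot]
    exact (discreteTopology_of_isOpen_singleton_one h).eq_bot
  obtain ⟨d, hd1, hdτ, hB⟩ := exists_seq_tendsto_one_boundedProducts_notMem_nhds (G := G)
  exact hB (nhds_mono (hatom.le_of_tendsto hd1 hdτ (tendsto_boundedProductsTopology d))
    (boundedProducts_mem_nhds d 0))
end

section
/- Let G be an abelian group endowed with a maximal group topology τ (i.e., τ is a Hausdorff non-discrete group topology such that the only group topology strictly finer than τ is the discrete topology). Then (G, τ) has no non-trivial convergent sequences: every sequence in G converging in (G, τ) is eventually constant. -/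
open OrderDual

/-!
Suppose `a n → 1` while `a n ≠ 1` infinitely often; from subsequences `b`, `c` of `a` we build a
strictly finer, non-discrete group topology. The products `∏ b i ^ k i` with at most `t / 2 ^ m`
factors of index `≤ t` form a symmetric set `sparseProducts b m` whose square lies in
`sparseProducts b (m - 1)`, so these sets are a basis at `1` of a group topology `ρ`, and the
coarsest topology finer than both `τ` and `ρ` is again a group topology. It is not discrete since
`b j ∈ sparseProducts b m` for `j ≥ 2 ^ m`, so `b` still tends to `1`.

It is strictly finer than `τ` because `c → 1` but no `c j` lies in `sparseProducts b 0`. To arrange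
this, `c j`, a neighbourhood `P j` of `1` and `b j` are chosen recursively so that
`P (j+1) * P (j+1) ⊆ P j`, `b j ^ z ∈ P j` for `|z| ≤ j`, and `c j` avoids the product of
`P j * P j` with the finitely many elements `∏_{i<j} b i ^ z i`, `|z i| ≤ i`. An element of
`sparseProducts b 0` splits into such a finite product and a tail `∏_{i≥j} b i ^ k i`, and the
halving property puts the tail into `P j * P j`.
-/

open Filter Topology Pointwise

theorem Int.finite_setOf_natAbs_le (n : ℕ) : {z : ℤ | z.natAbs ≤ n}.Finite :=
  (Set.finite_Icc (-(n : ℤ)) n).subset fun z (hz : z.natAbs ≤ n) => Set.mem_Icc.2 (by omega)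

theorem prod_Ico_mem_mul_self {M : Type*} [CommMonoid M] {P : ℕ → Set M} {f : ℕ → M}
    (hP₁ : ∀ i, 1 ∈ P i) (hP : ∀ i, P (i + 1) * P (i + 1) ⊆ P i) (hf : ∀ i, f i ∈ P i)
    (d r : ℕ) : ∏ i ∈ Finset.Ico r (r + d), f i ∈ P r * P r := by
  induction d generalizing r with
  | zero => simpa using Set.mul_mem_mul (hP₁ r) (hP₁ r)
  | succ d ih =>
    rw [Finset.prod_eq_prod_Ico_succ_bot (by omega), show r + (d + 1) = r + 1 + d by omega]
    exact Set.mul_mem_mul (hf r) (hP r (ih (r + 1)))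

theorem GroupTopology.exists_hasBasis_nhds_one {G : Type*} [CommGroup G] {W : ℕ → Set G}
    (h₁ : ∀ m, 1 ∈ W m) (h_inv : ∀ m x, x ∈ W m → x⁻¹ ∈ W m)
    (h_mul : ∀ m x y, x ∈ W (m + 1) → y ∈ W (m + 1) → x * y ∈ W m) :
    ∃ ρ : GroupTopology G, (@nhds G ρ.toTopologicalSpace 1).HasBasis (fun _ => True) W := by
  have hW : Antitone W := antitone_nat_of_succ_le fun m x hx => by
    simpa using h_mul m x 1 hx (h₁ (m + 1))
  let B := groupFilterBasisOfComm (Set.range W) (Set.range_nonempty W)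
    (by
      rintro _ _ ⟨m, rfl⟩ ⟨n, rfl⟩
      exact ⟨W (max m n), ⟨_, rfl⟩,
        Set.subset_inter (hW (le_max_left m n)) (hW (le_max_right m n))⟩)
    (by rintro _ ⟨m, rfl⟩; exact h₁ m)
    (by
      rintro _ ⟨m, rfl⟩
      exact ⟨W (m + 1), ⟨_, rfl⟩, Set.mul_subset_iff.2 fun x hx y hy => h_mul m x y hx hy⟩)
    (by rintro _ ⟨m, rfl⟩; exact ⟨W m, ⟨_, rfl⟩, h_inv m⟩)
  refine ⟨⟨B.topology, B.isTopologicalGroup⟩, ?_⟩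
  rw [B.nhds_one_eq]
  exact B.toFilterBasis.hasBasis.to_hasBasis (fun _ ⟨m, hm⟩ => ⟨m, trivial, hm.le⟩)
    (fun m _ => ⟨W m, ⟨m, rfl⟩, subset_rfl⟩)

section SparseProducts

variable {G : Type*} [CommGroup G]

def sparseProducts (b : ℕ → G) (m : ℕ) : Set G :=
  {x | ∃ k : ℕ →₀ ℤ, (∀ t, ∑ i ∈ Finset.Iic t, (k i).natAbs ≤ t / 2 ^ m) ∧
    k.prod (fun i z => b i ^ z) = x}

theorem one_mem_sparseProducts (b : ℕ → G) (m : ℕ) : 1 ∈ sparseProducts b m :=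
  ⟨0, by simp, by simp⟩

theorem inv_mem_sparseProducts {b : ℕ → G} {m : ℕ} {x : G} (hx : x ∈ sparseProducts b m) :
    x⁻¹ ∈ sparseProducts b m := by
  obtain ⟨k, hk, rfl⟩ := hx
  refine ⟨-k, by simpa using hk, ?_⟩
  simp [Finsupp.prod_neg_index, Finsupp.prod_inv]

theorem mul_mem_sparseProducts {b : ℕ → G} {m : ℕ} {x y : G}
    (hx : x ∈ sparseProducts b (m + 1)) (hy : y ∈ sparseProducts b (m + 1)) :
    x * y ∈ sparseProducts b m := by
  obtain ⟨k, hk, rfl⟩ := hx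
  obtain ⟨l, hl, rfl⟩ := hy
  refine ⟨k + l, fun t => ?_, Finsupp.prod_add_index' (fun _ => zpow_zero _) fun _ => zpow_add _⟩
  calc ∑ i ∈ Finset.Iic t, ((k + l) i).natAbs
      ≤ ∑ i ∈ Finset.Iic t, (k i).natAbs + ∑ i ∈ Finset.Iic t, (l i).natAbs := by
        rw [← Finset.sum_add_distrib]
        exact Finset.sum_le_sum fun i _ => Int.natAbs_add_le _ _
    _ ≤ t / 2 ^ (m + 1) + t / 2 ^ (m + 1) := add_le_add (hk t) (hl t)
    _ ≤ t / 2 ^ m := by rw [pow_succ, ← Nat.div_div_eq_div_mul]; omega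

theorem apply_mem_sparseProducts {b : ℕ → G} {m j : ℕ} (hj : 2 ^ m ≤ j) :
    b j ∈ sparseProducts b m := by
  refine ⟨Finsupp.single j 1, fun t => ?_, by simp⟩
  simp only [Finsupp.single_apply, apply_ite, Int.natAbs_one, Int.natAbs_zero,
    Finset.sum_ite_eq, Finset.mem_Iic]
  split_ifs with hjt
  · exact (Nat.one_le_div_iff (by positivity)).2 (hj.trans hjt)
  · exact Nat.zero_le _

theorem notMem_sparseProducts_zero {b : ℕ → G} {P : ℕ → Set G} {H : Set G} {j : ℕ} {c : G}
    (hP₁ : ∀ i, 1 ∈ P i) (hP : ∀ i, P (i + 1) * P (i + 1) ⊆ P i)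
    (hbP : ∀ i (z : ℤ), z.natAbs ≤ i → b i ^ z ∈ P i)
    (hH : ∀ z : ℕ → ℤ, (∀ i, (z i).natAbs ≤ i) → ∏ i ∈ Finset.range j, b i ^ z i ∈ H)
    (hc : c ∉ H * (P j * P j)) : c ∉ sparseProducts b 0 := by
  rintro ⟨k, hk, rfl⟩
  have hk_le : ∀ i, (k i).natAbs ≤ i := fun i =>
    (Finset.single_le_sum (f := fun i => (k i).natAbs) (fun _ _ => Nat.zero_le _)
      (Finset.mem_Iic.2 le_rfl)).trans (by simpa using hk i)
  obtain ⟨d, hd⟩ := Finset.exists_nat_subset_range k.support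
  rw [Finsupp.prod_of_support_subset k (hd.trans (Finset.range_mono (Nat.le_add_left d j))) _
    (fun _ _ => zpow_zero _), ← Finset.prod_range_mul_prod_Ico _ (Nat.le_add_right j d)] at hc
  exact hc (Set.mul_mem_mul (hH k hk_le)
    (prod_Ico_mem_mul_self hP₁ hP (fun i => hbP i (k i) (hk_le i)) d j))

theorem exists_groupTopology_lt_ne_bot_of_notMem_sparseProducts [TopologicalSpace G]
    [IsTopologicalGroup G] {b c : ℕ → G} (hb₁ : ∀ i, b i ≠ 1) (hb : Tendsto b atTop (𝓝 1))
    (hc : Tendsto c atTop (𝓝 1)) (hcb : ∀ j, c j ∉ sparseProducts b 0) :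
    ∃ σ : GroupTopology G, σ < ⟨‹_›, ‹_›⟩ ∧ σ ≠ ⊥ := by
  obtain ⟨ρ, hρ⟩ := GroupTopology.exists_hasBasis_nhds_one (one_mem_sparseProducts b)
    (fun _ _ => inv_mem_sparseProducts) (fun _ _ _ => mul_mem_sparseProducts)
  set τ : GroupTopology G := ⟨‹_›, ‹_›⟩
  refine ⟨τ ⊓ ρ, inf_le_left.lt_of_ne fun h => ?_, fun h => ?_⟩
  · have hτρ : τ.toTopologicalSpace ≤ ρ.toTopologicalSpace :=
      GroupTopology.toTopologicalSpace_le.2 (inf_eq_left.1 h)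
    have hW : sparseProducts b 0 ∈ 𝓝 (1 : G) := (le_iff_nhds _ _).1 hτρ 1 (hρ.mem_of_mem trivial)
    obtain ⟨j, hj⟩ := (hc.eventually_mem hW).exists
    exact hcb j hj
  · have hbρ : Tendsto b atTop (@nhds G ρ.toTopologicalSpace 1) :=
      hρ.tendsto_right_iff.2 fun m _ =>
        eventually_atTop.2 ⟨2 ^ m, fun _ hj => apply_mem_sparseProducts hj⟩
    have hbσ : Tendsto b atTop (@nhds G (τ ⊓ ρ).toTopologicalSpace 1) := by
      rw [GroupTopology.toTopologicalSpace_inf, nhds_inf]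
      exact tendsto_inf.2 ⟨hb, hbρ⟩
    rw [h, GroupTopology.toTopologicalSpace_bot, @nhds_discrete G ⊥ (discreteTopology_bot G),
      tendsto_pure] at hbσ
    obtain ⟨j, hj⟩ := hbσ.exists
    exact hb₁ j hj

end SparseProducts

section Construction

variable {G : Type*} [CommGroup G] [TopologicalSpace G] [IsTopologicalGroup G] [T1Space G]
  {a : ℕ → G}

theorem exists_terms_and_nhds_one_step (ha : Tendsto a atTop (𝓝 1))
    (ha₁ : ∃ᶠ n in atTop, a n ≠ 1) (j : ℕ) {H Q : Set G} (hH : H.Finite) (hQ : Q ∈ 𝓝 1) :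
    ∃ nb nc : ℕ, j ≤ nb ∧ j ≤ nc ∧ a nb ≠ 1 ∧ ∃ P ∈ 𝓝 (1 : G), P * P ⊆ Q ∧
      a nc ∉ H * (P * P) ∧ ∀ z : ℤ, z.natAbs ≤ j → a nb ^ z ∈ P := by
  have hH' : (H \ {1})ᶜ ∈ 𝓝 (1 : G) :=
    (hH.sdiff.isClosed.isOpen_compl).mem_nhds fun h => h.2 rfl
  obtain ⟨nc, hjnc, hnc₁, hncH⟩ :=
    (ha₁.and_eventually (ha.eventually_mem hH')).forall_exists_of_atTop j
  have hncH : a nc ∉ H := fun h => hncH ⟨h, hnc₁⟩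
  have hE : ∀ᶠ x in 𝓝 (1 : G), ∀ h ∈ H, h * x ≠ a nc :=
    hH.eventually_all.2 fun h hh =>
      ((continuous_const_mul h).tendsto' 1 h (mul_one h)).eventually_ne fun e => hncH (e ▸ hh)
  obtain ⟨P, hP, hPP⟩ := exists_nhds_one_split (inter_mem hE hQ)
  have hpow : ∀ᶠ n in atTop, ∀ z ∈ {z : ℤ | z.natAbs ≤ j}, a n ^ z ∈ P :=
    (Int.finite_setOf_natAbs_le j).eventually_all.2 fun z _ => by
      have : Tendsto (fun n => a n ^ z) atTop (𝓝 1) := by simpa using ha.zpow z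
      exact this.eventually_mem hP
  obtain ⟨nb, hjnb, hnb₁, hnbP⟩ := (ha₁.and_eventually hpow).forall_exists_of_atTop j
  refine ⟨nb, nc, hjnb, hjnc, hnb₁, P, hP, ?_, ?_, hnbP⟩
  · rintro _ ⟨v, hv, w, hw, rfl⟩
    exact (hPP v hv w hw).2
  · rintro ⟨h, hh, _, ⟨v, hv, w, hw, rfl⟩, e⟩
    exact (hPP v hv w hw).1 h hh e

theorem exists_subsequences_notMem_sparseProducts (ha : Tendsto a atTop (𝓝 1))
    (ha₁ : ∃ᶠ n in atTop, a n ≠ 1) :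
    ∃ b c : ℕ → G, (∀ i, b i ≠ 1) ∧ Tendsto b atTop (𝓝 1) ∧ Tendsto c atTop (𝓝 1) ∧
      ∀ j, c j ∉ sparseProducts b 0 := by
  choose! nb nc hnb hnc hnb₁ P hP hPQ hcP hbP using
    fun j (H Q : Set G) (hH : H.Finite) (hQ : Q ∈ 𝓝 (1 : G)) =>
      exists_terms_and_nhds_one_step ha ha₁ j hH hQ
  -- stage `j` records the finite set of products `∏_{i<j} b i ^ z i`, `|z i| ≤ i`, and `P (j-1)`
  let stage : ℕ → Set G × Set G := fun j => Nat.rec ({1}, Set.univ)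
    (fun j s => (s.1 * (fun z : ℤ => a (nb j s.1 s.2) ^ z) '' {z | z.natAbs ≤ j},
      P j s.1 s.2)) j
  have hstage : ∀ j, (stage j).1.Finite ∧ (stage j).2 ∈ 𝓝 (1 : G) := by
    intro j
    induction j with
    | zero => exact ⟨Set.finite_singleton 1, univ_mem⟩
    | succ j ih =>
      exact ⟨ih.1.mul ((Int.finite_setOf_natAbs_le j).image _), hP j _ _ ih.1 ih.2⟩
  let b j := a (nb j (stage j).1 (stage j).2)
  have hhead : ∀ j (z : ℕ → ℤ), (∀ i, (z i).natAbs ≤ i) →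
      ∏ i ∈ Finset.range j, b i ^ z i ∈ (stage j).1 := by
    intro j z hz
    induction j with
    | zero => simp [stage]
    | succ j ih =>
      rw [Finset.prod_range_succ]
      exact Set.mul_mem_mul ih ⟨z j, hz j, rfl⟩
  let c j := a (nc j (stage j).1 (stage j).2)
  let P' i := P i (stage i).1 (stage i).2
  refine ⟨b, c, fun j => hnb₁ j _ _ (hstage j).1 (hstage j).2, ?_, ?_, fun j => ?_⟩
  · exact ha.comp <|
      tendsto_atTop_mono (fun j => hnb j _ _ (hstage j).1 (hstage j).2) tendsto_id
  · exact ha.comp <|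
      tendsto_atTop_mono (fun j => hnc j _ _ (hstage j).1 (hstage j).2) tendsto_id
  · exact notMem_sparseProducts_zero (P := P')
      (fun i => mem_of_mem_nhds (hP i _ _ (hstage i).1 (hstage i).2))
      (fun i => hPQ (i + 1) _ _ (hstage (i + 1)).1 (hstage (i + 1)).2)
      (fun i => hbP i _ _ (hstage i).1 (hstage i).2) (hhead j)
      (hcP j _ _ (hstage j).1 (hstage j).2)

end Construction

theorem maximal_topology_no_convergent_sequences_general {G : Type*} [CommGroup G]
    (τ : GroupTopLattice G) (hH : @T2Space G (topOf τ))
    (hmax : ∀ σ : GroupTopLattice G, τ < σ → σ = ⊤) :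
    ∀ (u : ℕ → G) (x : G), Filter.Tendsto u Filter.atTop (@nhds G (topOf τ) x) →
      ∃ N : ℕ, ∀ n : ℕ, N ≤ n → u n = u N := by
  intro u x hux
  let _ : TopologicalSpace G := topOf τ
  have _ : IsTopologicalGroup G := (ofDual τ).toIsTopologicalGroup
  by_contra hu
  have ha₁ : ∃ᶠ n in atTop, u n * x⁻¹ ≠ 1 := fun hev => hu <| by
    obtain ⟨N, hN⟩ := eventually_atTop.1 hev
    have hx : ∀ n, N ≤ n → u n = x := fun n hn => mul_inv_eq_one.1 (not_not.1 (hN n hn))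
    exact ⟨N, fun n hn => (hx n hn).trans (hx N le_rfl).symm⟩
  obtain ⟨b, c, hb₁, hb, hc, hcb⟩ :=
    exists_subsequences_notMem_sparseProducts (by simpa using hux.mul_const x⁻¹) ha₁
  obtain ⟨σ, hσ, hσ_ne⟩ := exists_groupTopology_lt_ne_bot_of_notMem_sparseProducts hb₁ hb hc hcb
  exact hσ_ne (hmax (toDual σ) hσ)

/-- Let `G` be an abelian group endowed with a maximal group topology
`τ`: a Hausdorff, non-discrete group topology such that the only group topology strictly
finer than `τ` is the discrete topology `⊤`. Then `(G, τ)` has no non-trivial convergent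
sequences: every sequence in `G` converging in `(G, τ)` is eventually constant. -/
theorem maximal_topology_no_convergent_sequences {G : Type*} [CommGroup G]
    (τ : GroupTopLattice G) (hH : @T2Space G (topOf τ)) (hnd : τ ≠ ⊤)
    (hmax : ∀ σ : GroupTopLattice G, τ < σ → σ = ⊤) :
    ∀ (u : ℕ → G) (x : G), Filter.Tendsto u Filter.atTop (@nhds G (topOf τ) x) →
      ∃ N : ℕ, ∀ n : ℕ, N ≤ n → u n = u N :=
  maximal_topology_no_convergent_sequences_general τ hH hmax
end

section
/- Let G be an infinite abelian group and let τ be a Hausdorff group topology on G with Property Q. Then the character of (G, τ) is at most |G|: there exists a neighbourhood basis at the identity of (G, τ) whose cardinality is at most the cardinality of G. In particular, if G is countable then (G, τ) is first-countable. -/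
/-!
Suppose the character χ of `τ` exceeds `|G|`, and enumerate a basis `(U_j)_{j<χ}` of the
neighbourhoods of `1` along the initial ordinal of `χ`. In an abelian group, a neighbourhood `U`
of `1` starts a sequence `U = V₀ ⊇ V₁ ⊇ ⋯` of neighbourhoods with `V_{n+1} / V_{n+1} ⊆ V_n`, and
such a sequence is a basis at `1` of a coarser group topology `p U` of countable character.
For `i < χ`, the infimum `T_i` of the `p U` over the sets `G ∖ {g}` (`g ≠ 1`) and `U_j` (`j < i`)
is Hausdorff and has character at most `|G| + |i| < χ`, so it is strictly coarser than `τ`. The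
`T_i` form a chain, and a group topology finer than all of them has every `U_j` as a
neighbourhood of `1`, hence is finer than `τ`: Property Q fails. For countable `G` the character
is then at most `ℵ₀`, which is first-countability.
-/

open OrderDual

/-- A group topology is Hausdorff if the corresponding space is `T₂`. -/
def IsHausdorffTop {G : Type*} [Group G] (τ : GroupTopLattice G) : Prop :=
  @T2Space G (topOf τ)

/-- A Hausdorff group topology `τ` has Property Q if every chain in the poset
`{τ' ∈ 𝓛_G : τ' < τ and τ' Hausdorff}` has an upper bound belonging to that set. -/
def HasPropertyQ {G : Type*} [Group G] (τ : GroupTopLattice G) : Prop :=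
  ∀ C : Set (GroupTopLattice G),
    C ⊆ {τ' | τ' < τ ∧ IsHausdorffTop τ'} → IsChain (· ≤ ·) C →
      ∃ b, (b < τ ∧ IsHausdorffTop b) ∧ ∀ c ∈ C, c ≤ b

open Filter Set Topology Cardinal

universe u

local notation "𝓝₁[" σ "]" => @nhds _ (GroupTopology.toTopologicalSpace σ) 1

namespace Filter

variable {α : Type u}

noncomputable def character (f : Filter α) : Cardinal.{u} :=
  ⨅ B : {B : Set (Set α) // f.HasBasis (· ∈ B) id}, #B.1

theorem exists_hasBasis_mk_eq_character (f : Filter α) :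
    ∃ B : Set (Set α), f.HasBasis (· ∈ B) id ∧ #B = f.character := by
  have : Nonempty {B : Set (Set α) // f.HasBasis (· ∈ B) id} := ⟨⟨f.sets, f.basis_sets⟩⟩
  obtain ⟨⟨B, hB⟩, hBeq⟩ := ciInf_mem fun B : {B : Set (Set α) // f.HasBasis (· ∈ B) id} => #B.1
  exact ⟨B, hB, hBeq⟩

theorem HasBasis.character_le {f : Filter α} {B : Set (Set α)} (hB : f.HasBasis (· ∈ B) id) :
    f.character ≤ #B :=
  ciInf_le' (fun B : {B : Set (Set α) // f.HasBasis (· ∈ B) id} => #B.1) ⟨B, hB⟩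

theorem character_generate_le (s : Set (Set α)) : (generate s).character ≤ max ℵ₀ #s := by
  classical
  let inter : Finset s → Set α := fun F => ⋂ U ∈ F, (U : Set α)
  have hbasis : (generate s).HasBasis (· ∈ range inter) id := by
    refine (hasBasis_generate s).to_hasBasis' (fun t ⟨ht, hts⟩ => ?_) ?_
    · refine ⟨_, mem_range_self (ht.preimage Subtype.val_injective.injOn).toFinset, ?_⟩
      intro x hx u hu
      exact mem_iInter₂.1 hx ⟨u, hts hu⟩ (by simpa using hu)
    · rintro _ ⟨F, rfl⟩
      exact (biInter_finset_mem F).2 fun U _ => mem_generate_of_mem U.2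
  calc (generate s).character ≤ #(range inter) := hbasis.character_le
    _ ≤ #(Finset s) := mk_range_le
    _ ≤ #(List s) := mk_le_of_surjective List.toFinset_surjective
    _ ≤ max ℵ₀ #s := mk_list_le_max s

theorem character_iInf_le {ι : Type u} (f : ι → Filter α) [∀ i, (f i).IsCountablyGenerated] :
    (⨅ i, f i).character ≤ max ℵ₀ #ι := by
  choose s hs hfs using fun i => IsCountablyGenerated.out (f := f i)
  have hunion : #(⋃ i, s i) ≤ #ι * ℵ₀ :=
    (mk_iUnion_le s).trans <| by gcongr; exact ciSup_le' fun i => (hs i).le_aleph0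
  calc (⨅ i, f i).character = (generate (⋃ i, s i)).character := by
        simp_rw [hfs, ← generate_iUnion]
    _ ≤ max ℵ₀ #(⋃ i, s i) := character_generate_le _
    _ ≤ max ℵ₀ #ι := by
      refine max_le (le_max_left _ _) (hunion.trans ((mul_le_max _ _).trans_eq ?_))
      rw [max_assoc, max_self, max_comm]

end Filter

theorem IsTopologicalGroup.firstCountableTopology_of_isCountablyGenerated_nhds_one
    {G : Type*} [Group G] [TopologicalSpace G] [IsTopologicalGroup G]
    [(𝓝 (1 : G)).IsCountablyGenerated] : FirstCountableTopology G :=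
  ⟨fun x => by rw [← nhds_translation_mul_inv x]; infer_instance⟩

theorem exists_seq_nhds_one_div_mem {G : Type*} [Group G] [TopologicalSpace G]
    [IsTopologicalGroup G] {U : Set G} (hU : U ∈ 𝓝 (1 : G)) :
    ∃ V : ℕ → Set G, V 0 = U ∧ (∀ n, V n ∈ 𝓝 1) ∧
      ∀ n, ∀ v ∈ V (n + 1), ∀ w ∈ V (n + 1), v / w ∈ V n := by
  choose! half hhalf hdiv using fun W (hW : W ∈ 𝓝 (1 : G)) => exists_nhds_split_inv hW
  have hmem : ∀ n, half^[n] U ∈ 𝓝 1 := fun n => by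
    induction n with
    | zero => exact hU
    | succ n ih => rw [Function.iterate_succ_apply']; exact hhalf _ ih
  refine ⟨fun n => half^[n] U, rfl, hmem, fun n => ?_⟩
  simpa only [Function.iterate_succ_apply'] using hdiv _ (hmem n)

namespace GroupTopology

theorem le_of_nhds_one_le {G : Type*} [Group G] {σ ρ : GroupTopology G}
    (h : 𝓝₁[σ] ≤ 𝓝₁[ρ]) : σ ≤ ρ := by
  refine inf_eq_left.1 (toTopologicalSpace_injective ?_)
  refine IsTopologicalGroup.ext (σ ⊓ ρ).toIsTopologicalGroup σ.toIsTopologicalGroup ?_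
  rw [toTopologicalSpace_inf, nhds_inf, inf_eq_left.2 h]

variable {G : Type u} [CommGroup G]

theorem exists_nhds_one_hasBasis_of_div_mem {V : ℕ → Set G} (h1 : ∀ n, (1 : G) ∈ V n)
    (hV : ∀ n, ∀ v ∈ V (n + 1), ∀ w ∈ V (n + 1), v / w ∈ V n) :
    ∃ p : GroupTopology G, 𝓝₁[p].HasBasis (fun _ => True) V := by
  have hsucc : ∀ n, V (n + 1) ⊆ V n := fun n v hv => by simpa using hV n v hv 1 (h1 _)
  have hinv : ∀ n, ∀ w ∈ V (n + 1), w⁻¹ ∈ V n := fun n w hw => by simpa using hV n 1 (h1 _) w hw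
  have hanti : Antitone V := antitone_nat_of_succ_le hsucc
  let B : GroupFilterBasis G := groupFilterBasisOfComm (range V) (range_nonempty V)
    (by
      rintro _ _ ⟨m, rfl⟩ ⟨n, rfl⟩
      exact ⟨V (max m n), mem_range_self _,
        subset_inter (hanti (le_max_left m n)) (hanti (le_max_right m n))⟩)
    (by rintro _ ⟨n, rfl⟩; exact h1 n)
    (by
      rintro _ ⟨n, rfl⟩
      refine ⟨V (n + 2), mem_range_self _, Set.mul_subset_iff.2 fun v hv w hw => ?_⟩
      simpa using hV n v (hsucc _ hv) w⁻¹ (hinv _ w hw))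
    (by rintro _ ⟨n, rfl⟩; exact ⟨V (n + 1), mem_range_self _, hinv n⟩)
  refine ⟨⟨B.topology, B.isTopologicalGroup⟩, ?_⟩
  exact B.nhds_one_hasBasis.to_hasBasis (fun _ ⟨n, hn⟩ => ⟨n, trivial, hn.le⟩)
    fun n _ => ⟨V n, mem_range_self n, subset_rfl⟩

theorem exists_ge_mem_nhds_one_isCountablyGenerated (σ : GroupTopology G) {U : Set G}
    (hU : U ∈ 𝓝₁[σ]) :
    ∃ p : GroupTopology G, σ ≤ p ∧ U ∈ 𝓝₁[p] ∧ 𝓝₁[p].IsCountablyGenerated := by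
  let := σ.toTopologicalSpace
  have := σ.toIsTopologicalGroup
  obtain ⟨V, rfl, hVnhds, hVdiv⟩ := exists_seq_nhds_one_div_mem hU
  obtain ⟨p, hp⟩ :=
    exists_nhds_one_hasBasis_of_div_mem (fun n => mem_of_mem_nhds (hVnhds n)) hVdiv
  exact ⟨p, le_of_nhds_one_le (hp.ge_iff.2 fun n _ => hVnhds n), hp.mem_of_mem trivial,
    hp.isCountablyGenerated⟩

theorem exists_antitone_ge_character_le (σ : GroupTopology G) :
    ∃ c : Set (Set G) → GroupTopology G, Antitone c ∧ ∀ S : Set (Set G), (∀ U ∈ S, U ∈ 𝓝₁[σ]) →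
      σ ≤ c S ∧ (∀ U ∈ S, U ∈ 𝓝₁[c S]) ∧ 𝓝₁[c S].character ≤ max ℵ₀ #S := by
  choose! p hσp hUp hp using fun U (hU : U ∈ 𝓝₁[σ]) =>
    σ.exists_ge_mem_nhds_one_isCountablyGenerated hU
  refine ⟨fun S => ⨅ U : S, p U, fun S S' hSS' => iInf_mono' fun U => ⟨⟨U, hSS' U.2⟩, le_rfl⟩,
    fun S hS => ?_⟩
  have hnhds : 𝓝₁[⨅ U : S, p U] = ⨅ U : S, 𝓝₁[p U] := by
    rw [toTopologicalSpace_iInf, nhds_iInf]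
  have : ∀ U : S, 𝓝₁[p U].IsCountablyGenerated := fun U => hp U (hS U U.2)
  refine ⟨le_iInf fun U => hσp U (hS U U.2), fun U hU => ?_, ?_⟩
  · rw [hnhds]
    exact mem_iInf_of_mem ⟨U, hU⟩ (hUp U (hS U hU))
  · rw [hnhds]
    exact Filter.character_iInf_le _

end GroupTopology

theorem exists_hausdorff_chain_of_mk_lt_character {G : Type u} [CommGroup G] [Infinite G]
    (τ : GroupTopLattice G) (hH : IsHausdorffTop τ) (hχ : #G < 𝓝₁[ofDual τ].character) :
    ∃ C ⊆ {τ' | τ' < τ ∧ IsHausdorffTop τ'}, IsChain (· ≤ ·) C ∧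
      ∀ b, (∀ c ∈ C, c ≤ b) → τ ≤ b := by
  set σ := ofDual τ
  obtain ⟨c, hc_anti, hc⟩ := σ.exists_antitone_ge_character_le
  obtain ⟨B, hB, hBχ⟩ := 𝓝₁[σ].exists_hasBasis_mk_eq_character
  set χ := 𝓝₁[σ].character
  have hℵ₀ : ℵ₀ < χ := (aleph0_le_mk G).trans_lt hχ
  let ι := χ.ord.ToType
  have : NoMaxOrder ι := noMaxOrder hℵ₀.le
  obtain ⟨e⟩ : Nonempty (ι ≃ B) := Cardinal.eq.1 (by rw [mk_ord_toType, hBχ])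
  let S : ι → Set (Set G) := fun i =>
    ((fun g => {g}ᶜ) '' {1}ᶜ) ∪ range fun j : Iio i => (e j : Set G)
  have hS_nhds : ∀ i, ∀ U ∈ S i, U ∈ 𝓝₁[σ] := by
    let := σ.toTopologicalSpace
    have : T2Space G := hH
    rintro i _ (⟨g, hg, rfl⟩ | ⟨j, rfl⟩)
    · exact compl_singleton_mem_nhds (Ne.symm hg)
    · exact hB.mem_of_mem (e j).2
  have hS_mono : Monotone S := fun i i' hii' =>
    union_subset_union_right _ fun _ ⟨j, hj⟩ => ⟨⟨j, lt_of_lt_of_le j.2 hii'⟩, hj⟩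
  have hS_card : ∀ i, max ℵ₀ #(S i) < χ := fun i => by
    have hIio : #(Iio i) < χ :=
      (mk_Iio_lt i (by rw [mk_ord_toType, Ordinal.type_toType])).trans_eq (mk_ord_toType χ)
    refine max_lt hℵ₀ ((mk_union_le _ _).trans_lt (add_lt_of_lt hℵ₀.le ?_ ?_))
    · exact mk_image_le.trans_lt ((mk_set_le _).trans_lt hχ)
    · exact mk_range_le.trans_lt hIio
  refine ⟨range fun i => toDual (c (S i)), ?_, ?_, fun b hb => ?_⟩
  · rintro _ ⟨i, rfl⟩
    obtain ⟨hσc, hSc, hcχ⟩ := hc (S i) (hS_nhds i)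
    refine ⟨show σ < c (S i) from hσc.lt_of_ne ?_, ?_⟩
    · rintro heq
      exact (hcχ.trans_lt (hS_card i)).ne (by rw [← heq])
    · show @T2Space G (c (S i)).toTopologicalSpace
      let := (c (S i)).toTopologicalSpace
      have := (c (S i)).toIsTopologicalGroup
      exact IsTopologicalGroup.t2Space_of_one_sep fun x hx =>
        ⟨{x}ᶜ, hSc _ (Or.inl ⟨x, hx, rfl⟩), fun h => h rfl⟩
  · rintro _ ⟨i, rfl⟩ _ ⟨j, rfl⟩ -
    rcases le_total i j with h | h
    · exact Or.inl (hc_anti (hS_mono h))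
    · exact Or.inr (hc_anti (hS_mono h))
  · show ofDual b ≤ σ
    refine GroupTopology.le_of_nhds_one_le (hB.ge_iff.2 fun U hU => ?_)
    obtain ⟨i, hi⟩ := exists_gt (e.symm ⟨U, hU⟩)
    have hUS : U ∈ S i := Or.inr ⟨⟨_, hi⟩, by simp⟩
    exact nhds_mono (hb _ ⟨i, rfl⟩) ((hc (S i) (hS_nhds i)).2.1 U hUS)

/-- Let `G` be an infinite abelian group and `τ` a Hausdorff group
topology on `G` with Property Q. Then the character of `(G, τ)` is at most `|G|`: there
is a neighbourhood basis at the identity of `(G, τ)` of cardinality at most `|G|`.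
In particular, if `G` is countable then `(G, τ)` is first-countable. -/
theorem character_le_card_of_propertyQ {G : Type*} [CommGroup G] [Infinite G]
    (τ : GroupTopLattice G) (hH : IsHausdorffTop τ) (hQ : HasPropertyQ τ) :
    (∃ B : Set (Set G), (@nhds G (topOf τ) 1).HasBasis (· ∈ B) id ∧
        Cardinal.mk B ≤ Cardinal.mk G) ∧
      (Countable G → @FirstCountableTopology G (topOf τ)) := by
  have hχ : 𝓝₁[ofDual τ].character ≤ #G := by
    by_contra! hlt
    obtain ⟨C, hC, hchain, hsup⟩ := exists_hausdorff_chain_of_mk_lt_character τ hH hlt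
    obtain ⟨b, ⟨hbτ, -⟩, hb⟩ := hQ C hC hchain
    exact hbτ.not_ge (hsup b hb)
  obtain ⟨B, hB, hBχ⟩ := 𝓝₁[ofDual τ].exists_hasBasis_mk_eq_character
  refine ⟨⟨B, hB, hBχ ▸ hχ⟩, fun hG => ?_⟩
  let := topOf τ
  have : IsTopologicalGroup G := (ofDual τ).toIsTopologicalGroup
  have : (𝓝 (1 : G)).IsCountablyGenerated :=
    HasCountableBasis.isCountablyGenerated
      ⟨hB, le_aleph0_iff_set_countable.1 ((hBχ.trans_le hχ).trans (mk_le_aleph0_iff.2 hG))⟩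
  exact IsTopologicalGroup.firstCountableTopology_of_isCountablyGenerated_nhds_one
end
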